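/- arXiv:1806.11500 — 5 statements merged into one kernel-verified Lean document; each statement's English description precedes it below -/
import Mathlib

section
/- Let Z be a measurable space, D a probability distribution on Z, and f : Z^n → ℝ^d a measurable function with the bounded-differences property: for any two datasets S, S' ∈ Z^n that differ in exactly one coordinate, ‖f(S) − f(S')‖ ≤ β. Then for any δ ∈ (0,1), with probability at least 1 − δ over i.i.d. draws S ~ D^n, ‖f(S) − E_{S'~D^n}[f(S')]‖ < β sqrt(2 n ln(2/δ)). -/
open MeasureTheory Real

lemma two_point_hoeffding (p : ℝ) (hp0 : 0 ≤ p) (hp1 : p ≤ 1) (t : ℝ) :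
    1 - p + p * exp t ≤ exp (p * t + t ^ 2 / 8) := by
  have hD : ∀ x : ℝ, 0 < 1 - p + p * exp x := by
    intro x
    rcases lt_or_eq_of_le hp1 with h | h
    · have : 0 ≤ p * exp x := mul_nonneg hp0 (exp_pos x).le
      linarith
    · subst h; simpa using exp_pos x
  -- G is the derivative of F below
  set G : ℝ → ℝ := fun x => p + x / 4 - p * exp x / (1 - p + p * exp x) with hGdef
  have hDd : ∀ x : ℝ, HasDerivAt (fun y => 1 - p + p * exp y) (p * exp x) x := by
    intro x
    simpa using ((Real.hasDerivAt_exp x).const_mul p).const_add (1 - p)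
  have hGd : ∀ x : ℝ, HasDerivAt G
      (1 / 4 - (p * exp x * (1 - p + p * exp x) - p * exp x * (p * exp x)) /
        (1 - p + p * exp x) ^ 2) x := by
    intro x
    have h1 : HasDerivAt (fun y => p * exp y / (1 - p + p * exp y))
        ((p * exp x * (1 - p + p * exp x) - p * exp x * (p * exp x)) /
          (1 - p + p * exp x) ^ 2) x :=
      ((Real.hasDerivAt_exp x).const_mul p).div (hDd x) (hD x).ne'
    have h2 : HasDerivAt (fun y : ℝ => p + y / 4) (1 / 4) x := by
      simpa using ((hasDerivAt_id x).div_const 4).const_add p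
    exact h2.sub h1
  have hGderiv_nonneg : ∀ x : ℝ, 0 ≤ deriv G x := by
    intro x
    rw [(hGd x).deriv]
    set q : ℝ := p * exp x / (1 - p + p * exp x) with hq
    have hDx := hD x
    have hnum : (p * exp x * (1 - p + p * exp x) - p * exp x * (p * exp x)) /
        (1 - p + p * exp x) ^ 2 = q * (1 - q) := by
      rw [hq]
      field_simp
    rw [hnum]
    nlinarith [sq_nonneg (2 * q - 1)]
  have hGmono : Monotone G := by
    refine monotone_of_deriv_nonneg (fun x => (hGd x).differentiableAt) hGderiv_nonneg
  have hG0 : G 0 = 0 := by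
    simp [hGdef]
  -- F
  set F : ℝ → ℝ := fun x => p * x + x ^ 2 / 8 - Real.log (1 - p + p * exp x) with hFdef
  have hFd : ∀ x : ℝ, HasDerivAt F (G x) x := by
    intro x
    have hlog : HasDerivAt (fun y => Real.log (1 - p + p * exp y))
        (p * exp x / (1 - p + p * exp x)) x := (hDd x).log (hD x).ne'
    have h2 : HasDerivAt (fun y : ℝ => p * y + y ^ 2 / 8) (p + 2 * x / 8) x := by
      have := ((hasDerivAt_pow 2 x).div_const 8).const_add 0
      have h3 : HasDerivAt (fun y : ℝ => p * y) p x := by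
        simpa using (hasDerivAt_id x).const_mul p
      exact (h3.add ((hasDerivAt_pow 2 x).div_const 8)).congr_deriv (by norm_num)
    have := h2.sub hlog
    refine this.congr_deriv ?_
    show _ = p + x / 4 - p * exp x / (1 - p + p * exp x)
    ring
  have hF0 : F 0 = 0 := by simp [hFdef]
  have hFnonneg : 0 ≤ F t := by
    rcases le_total 0 t with h | h
    · have hFcont : Continuous F := by
        have : Continuous fun x : ℝ => 1 - p + p * exp x := by fun_prop
        exact ((continuous_const.mul continuous_id).add
          ((continuous_pow 2).div_const 8)).sub (this.log (fun x => (hD x).ne'))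
      have hmono : MonotoneOn F (Set.Ici (0:ℝ)) := by
        refine monotoneOn_of_deriv_nonneg (convex_Ici 0)
          hFcont.continuousOn ?_ ?_
        · intro x _; exact (hFd x).differentiableAt.differentiableWithinAt
        · intro x hx
          rw [(hFd x).deriv]
          rw [interior_Ici] at hx
          have := hGmono (le_of_lt hx)
          rw [hG0] at this; exact this
      have := hmono Set.self_mem_Ici (Set.mem_Ici.2 h) h
      rwa [hF0] at this
    · have hFcont : Continuous F := by
        have : Continuous fun x : ℝ => 1 - p + p * exp x := by fun_prop
        exact ((continuous_const.mul continuous_id).add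
          ((continuous_pow 2).div_const 8)).sub (this.log (fun x => (hD x).ne'))
      have hanti : AntitoneOn F (Set.Iic (0:ℝ)) := by
        refine antitoneOn_of_deriv_nonpos (convex_Iic 0)
          hFcont.continuousOn ?_ ?_
        · intro x _; exact (hFd x).differentiableAt.differentiableWithinAt
        · intro x hx
          rw [(hFd x).deriv]
          rw [interior_Iic] at hx
          have := hGmono (le_of_lt hx)
          rw [hG0] at this; exact this
      have := hanti (Set.mem_Iic.2 h) Set.self_mem_Iic h
      rwa [hF0] at this
    
  have : Real.log (1 - p + p * exp t) ≤ p * t + t ^ 2 / 8 := by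
    have := hFnonneg; simp only [hFdef] at this; linarith
  exact (Real.log_le_iff_le_exp (hD t)).1 this

lemma integrable_of_bdd {α : Type*} [MeasurableSpace α] {ν : Measure α} [IsFiniteMeasure ν]
    {X : α → ℝ} (hX : Measurable X) {C : ℝ} (hC : ∀ x, |X x| ≤ C) : Integrable X ν :=
  ⟨hX.aestronglyMeasurable, HasFiniteIntegral.of_bounded (C := C) (ae_of_all _ hC)⟩

lemma nonempty_of_prob {α : Type*} [MeasurableSpace α] (ν : Measure α) [IsProbabilityMeasure ν] :
    Nonempty α := by
  by_contra h
  have : ν Set.univ = 0 := by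
    rw [Set.univ_eq_empty_iff.2 (not_nonempty_iff.1 h)]; simp
  simp [measure_univ] at this

lemma chord_bound (u h y : ℝ) (hh : 0 < h) (hy1 : -h ≤ y) (hy2 : y ≤ h) :
    exp (u * y / h) ≤ cosh u + (y / h) * sinh u := by
  have hw1 : (0:ℝ) ≤ (h + y) / (2 * h) := by
    apply div_nonneg; linarith; positivity
  have hw2 : (0:ℝ) ≤ (h - y) / (2 * h) := by
    apply div_nonneg; linarith; positivity
  have hwsum : (h + y) / (2 * h) + (h - y) / (2 * h) = 1 := by
    field_simp
    ring
  have hcvx := convexOn_exp.2 (Set.mem_univ u) (Set.mem_univ (-u)) hw1 hw2 hwsum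
  have harg : ((h + y) / (2 * h)) • u + ((h - y) / (2 * h)) • (-u) = u * y / h := by
    simp only [smul_eq_mul]
    field_simp
    ring
  rw [harg] at hcvx
  refine hcvx.trans (le_of_eq ?_)
  simp only [smul_eq_mul]
  rw [Real.cosh_eq, Real.sinh_eq]
  field_simp
  ring

lemma cosh_add_mul_sinh_le (u s : ℝ) (hs : |s| ≤ 1) :
    cosh u + s * sinh u ≤ exp (s * u + u ^ 2 / 2) := by
  obtain ⟨hs1, hs2⟩ := abs_le.1 hs
  have hp0 : (0:ℝ) ≤ (1 + s) / 2 := by linarith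
  have hp1 : (1 + s) / 2 ≤ 1 := by linarith
  have key := two_point_hoeffding ((1 + s) / 2) hp0 hp1 (2 * u)
  have heq : cosh u + s * sinh u
      = exp (-u) * (1 - (1 + s) / 2 + (1 + s) / 2 * exp (2 * u)) := by
    rw [Real.cosh_eq, Real.sinh_eq, exp_neg, two_mul, exp_add]
    field_simp [exp_ne_zero]
    ring
  rw [heq]
  calc exp (-u) * (1 - (1 + s) / 2 + (1 + s) / 2 * exp (2 * u))
      ≤ exp (-u) * exp ((1 + s) / 2 * (2 * u) + (2 * u) ^ 2 / 8) := by
        exact mul_le_mul_of_nonneg_left key (exp_nonneg _)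
    _ = exp (s * u + u ^ 2 / 2) := by rw [← exp_add]; ring_nf

/-- One-variable Hoeffding lemma. -/
lemma hoeffding_one_var {α : Type*} [MeasurableSpace α] (ν : Measure α) [IsProbabilityMeasure ν]
    (X : α → ℝ) (hX : Measurable X) (c : ℝ) (hc : 0 < c)
    (hosc : ∀ x y, X x - X y ≤ c) (l : ℝ) :
    ∫ x, exp (l * X x) ∂ν ≤ exp (l * ∫ x, X x ∂ν + l ^ 2 * c ^ 2 / 8) := by
  haveI : Nonempty α := nonempty_of_prob ν
  obtain x₀ := Classical.arbitrary α
  have hbdd : BddBelow (Set.range X) := ⟨X x₀ - c, by rintro _ ⟨y, rfl⟩; linarith [hosc x₀ y]⟩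
  set a : ℝ := ⨅ x, X x with ha
  have ha1 : ∀ x, a ≤ X x := fun x => ciInf_le hbdd x
  have ha2 : ∀ x, X x ≤ a + c := by
    intro x
    have : X x - c ≤ a := le_ciInf fun y => by linarith [hosc x y]
    linarith
  have hXbd : ∀ x, |X x| ≤ |a| + c := fun x => abs_le.2
    ⟨by have := ha1 x; have := neg_abs_le a; linarith,
     by have := ha2 x; have := le_abs_self a; linarith⟩
  have hXint : Integrable X ν := integrable_of_bdd hX hXbd
  have hh : (0:ℝ) < c / 2 := by linarith
  -- chord bound pointwise, with m := a + c/2, u := l * (c/2)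
  have hchord : ∀ x, exp (l * (X x - (a + c / 2)))
      ≤ cosh (l * (c / 2)) + ((X x - (a + c / 2)) / (c / 2)) * sinh (l * (c / 2)) := by
    intro x
    have h1 : -(c/2) ≤ X x - (a + c / 2) := by linarith [ha1 x]
    have h2 : X x - (a + c / 2) ≤ c/2 := by linarith [ha2 x]
    have := chord_bound (l * (c/2)) (c/2) (X x - (a + c/2)) hh h1 h2
    have harg : l * (c/2) * (X x - (a + c/2)) / (c/2) = l * (X x - (a + c/2)) := by
      field_simp
    rwa [harg] at this
  have hint1 : Integrable (fun x => exp (l * (X x - (a + c / 2)))) ν := by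
    apply integrable_of_bdd (C := exp (|l| * (c / 2))) (by fun_prop)
    intro x
    rw [abs_of_nonneg (exp_nonneg _)]
    apply exp_le_exp.2
    refine (le_abs_self _).trans ?_
    rw [abs_mul]
    have habs : |X x - (a + c / 2)| ≤ c / 2 :=
      abs_le.2 ⟨by linarith [ha1 x], by linarith [ha2 x]⟩
    exact mul_le_mul_of_nonneg_left habs (abs_nonneg l)
  have hint2 : Integrable (fun x => cosh (l * (c / 2))
      + ((X x - (a + c / 2)) / (c / 2)) * sinh (l * (c / 2))) ν := by
    exact (integrable_const _).add
      (((hXint.sub (integrable_const _)).div_const _).mul_const _)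
  have hmono := integral_mono hint1 hint2 hchord
  have hintlin : Integrable (fun x => (X x - (a + c / 2)) / (c / 2) * sinh (l * (c / 2))) ν := by
    have := ((hXint.sub (integrable_const (a + c/2))).div_const (c/2)).mul_const
      (sinh (l * (c / 2)))
    simpa using this
  have hR : ∫ x, (cosh (l * (c / 2))
      + ((X x - (a + c / 2)) / (c / 2)) * sinh (l * (c / 2))) ∂ν
      = cosh (l * (c / 2)) + (((∫ x, X x ∂ν) - (a + c / 2)) / (c / 2)) * sinh (l * (c / 2)) := by
    rw [integral_add (integrable_const _) hintlin, integral_const, integral_mul_const,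
      integral_div, integral_sub hXint (integrable_const _), integral_const]
    simp [measure_univ]
  rw [hR] at hmono
  set s : ℝ := ((∫ x, X x ∂ν) - (a + c / 2)) / (c / 2) with hs
  have hIa : a ≤ ∫ x, X x ∂ν := by
    have := integral_mono (integrable_const a) hXint ha1
    simpa [measure_univ] using this
  have hIb : (∫ x, X x ∂ν) ≤ a + c := by
    have := integral_mono hXint (integrable_const (a + c)) ha2
    simpa [measure_univ] using this
  have hsabs : |s| ≤ 1 := by
    rw [hs, abs_div, abs_of_pos hh, div_le_one hh]
    exact abs_le.2 ⟨by linarith, by linarith⟩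
  have hkey := (hmono.trans (cosh_add_mul_sinh_le (l * (c / 2)) s hsabs))
  -- put together
  have hfinal : ∫ x, exp (l * X x) ∂ν
      = exp (l * (a + c / 2)) * ∫ x, exp (l * (X x - (a + c / 2))) ∂ν := by
    rw [← integral_const_mul]
    congr 1
    ext x
    rw [← exp_add]
    ring_nf
  rw [hfinal]
  calc exp (l * (a + c / 2)) * ∫ x, exp (l * (X x - (a + c / 2))) ∂ν
      ≤ exp (l * (a + c / 2)) * exp (s * (l * (c / 2)) + (l * (c / 2)) ^ 2 / 2) :=
        mul_le_mul_of_nonneg_left hkey (exp_nonneg _)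
    _ = exp (l * (a + c / 2) + s * (l * (c / 2)) + (l * (c / 2)) ^ 2 / 2) := by
        rw [← exp_add]; ring_nf
    _ ≤ exp (l * ∫ x, X x ∂ν + l ^ 2 * c ^ 2 / 8) := by
        apply exp_le_exp.2
        have : s * (l * (c/2)) = l * ((∫ x, X x ∂ν) - (a + c/2)) := by
          rw [hs]; field_simp
        rw [this]
        ring_nf
        exact le_rfl

/-- McDiarmid MGF bound. -/
lemma mcdiarmid_mgf {Z : Type*} [MeasurableSpace Z] (D : Measure Z) [IsProbabilityMeasure D]
    (β : ℝ) (hβ : 0 < β) (l : ℝ) :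
    ∀ (n : ℕ) (g : (Fin n → Z) → ℝ), Measurable g →
    ∀ (Mb : ℝ), (∀ S, |g S| ≤ Mb) →
    (∀ (i : Fin n) (S S' : Fin n → Z), (∀ j, j ≠ i → S j = S' j) → g S - g S' ≤ β) →
    ∫ S, exp (l * g S) ∂(Measure.pi fun _ : Fin n => D)
      ≤ exp (l * (∫ S, g S ∂(Measure.pi fun _ : Fin n => D)) + n * l ^ 2 * β ^ 2 / 8) := by
  intro n
  induction n with
  | zero =>
    intro g hgm Mb hb hbd
    have hconst : ∀ S : Fin 0 → Z, g S = g default := fun S =>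
      congrArg g (Subsingleton.elim S default)
    simp_rw [hconst]
    rw [integral_const, integral_const]
    simp [measure_univ]
  | succ n IH =>
    intro g hgm Mb hb hbd
    set μn : Measure (Fin n → Z) := Measure.pi fun _ : Fin n => D with hμn
    set e := MeasurableEquiv.piFinSuccAbove (fun _ : Fin (n+1) => Z) 0 with he
    have mp : MeasurePreserving e (Measure.pi fun _ : Fin (n+1) => D) (D.prod μn) :=
      measurePreserving_piFinSuccAbove (fun _ => D) 0
    -- G on the product space
    set G : Z × (Fin n → Z) → ℝ := fun p => g (e.symm p) with hG
    have hGm : Measurable G := hgm.comp e.symm.measurable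
    have hGb : ∀ p, |G p| ≤ Mb := fun p => hb _
    -- coordinates of e.symm
    have hsymm0 : ∀ (x : Z) (r : Fin n → Z), e.symm (x, r) 0 = x := by
      intro x r
      simp [he, MeasurableEquiv.piFinSuccAbove, Fin.insertNthEquiv]
    have hsymms : ∀ (x : Z) (r : Fin n → Z) (j : Fin n),
        e.symm (x, r) (Fin.succAbove 0 j) = r j := by
      intro x r j
      simp [he, MeasurableEquiv.piFinSuccAbove, Fin.insertNthEquiv]
    -- h
    set h : (Fin n → Z) → ℝ := fun r => ∫ x, G (x, r) ∂D with hh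
    have hhm : Measurable h := by
      have : StronglyMeasurable G := hGm.stronglyMeasurable
      exact this.integral_prod_left'.measurable
    have hhb : ∀ r, |h r| ≤ Mb := by
      intro r
      have : ‖∫ x, G (x, r) ∂D‖ ≤ Mb * (D Set.univ).toReal := by
        apply norm_integral_le_of_norm_le_const
        exact ae_of_all _ fun x => by simpa using hGb (x, r)
      simpa [measure_univ] using this
    -- osc in first coordinate
    have hosc1 : ∀ (r : Fin n → Z) (x x' : Z), G (x, r) - G (x', r) ≤ β := by
      intro r x x'
      apply hbd 0
      intro j hj
      rcases Fin.eq_zero_or_eq_succ j with rfl | ⟨k, rfl⟩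
      · exact absurd rfl hj
      · have h1 := hsymms x r k
        have h2 := hsymms x' r k
        have hsa : Fin.succAbove 0 k = k.succ := rfl
        rw [hsa] at h1 h2
        rw [h1, h2]
    -- bounded differences of h
    have hbdh : ∀ (i : Fin n) (r r' : Fin n → Z), (∀ j, j ≠ i → r j = r' j) →
        h r - h r' ≤ β := by
      intro i r r' hje
      have hpt : ∀ x, G (x, r) - G (x, r') ≤ β := by
        intro x
        apply hbd (Fin.succAbove 0 i)
        intro j hj
        rcases Fin.eq_zero_or_eq_succ j with rfl | ⟨k, rfl⟩
        · rw [hsymm0, hsymm0]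
        · have hsa : ∀ m : Fin n, Fin.succAbove (0 : Fin (n+1)) m = m.succ := fun _ => rfl
          rw [← hsa k, hsymms, hsymms]
          apply hje
          intro hk
          exact hj (by rw [hk, hsa])
      have hint1 : Integrable (fun x => G (x, r)) D :=
        integrable_of_bdd (hGm.comp (measurable_id.prodMk measurable_const)) (fun x => hGb _)
      have hint2 : Integrable (fun x => G (x, r')) D :=
        integrable_of_bdd (hGm.comp (measurable_id.prodMk measurable_const)) (fun x => hGb _)
      have : h r - h r' = ∫ x, (G (x, r) - G (x, r')) ∂D := by
        rw [integral_sub hint1 hint2]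
      rw [this]
      calc ∫ x, (G (x, r) - G (x, r')) ∂D ≤ ∫ _x, β ∂D :=
            integral_mono (hint1.sub hint2) (integrable_const β) hpt
        _ = β := by simp [measure_univ]
    -- integrability on the product
    have hexpGint : Integrable (fun p => exp (l * G p)) (D.prod μn) := by
      apply integrable_of_bdd (by fun_prop) (C := exp (|l| * Mb))
      intro p
      rw [abs_of_nonneg (exp_nonneg _)]
      apply exp_le_exp.2
      refine (le_abs_self _).trans ?_
      rw [abs_mul]
      exact mul_le_mul_of_nonneg_left (hGb p) (abs_nonneg l)
    have hGint : Integrable G (D.prod μn) := integrable_of_bdd hGm hGb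
    -- main chain
    have step1 : ∫ S, exp (l * g S) ∂(Measure.pi fun _ : Fin (n+1) => D)
        = ∫ r, ∫ x, exp (l * G (x, r)) ∂D ∂μn := by
      have htr := mp.integral_comp e.measurableEmbedding (fun p => exp (l * G p))
      simp only [hG, MeasurableEquiv.symm_apply_apply] at htr
      rw [htr]
      exact integral_prod_symm _ hexpGint
    have step2 : ∀ r, ∫ x, exp (l * G (x, r)) ∂D ≤ exp (l * h r + l ^ 2 * β ^ 2 / 8) := by
      intro r
      exact hoeffding_one_var D (fun x => G (x, r))
        (hGm.comp (measurable_id.prodMk measurable_const)) β hβ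
        (fun x y => hosc1 r x y) l
    have hinnerm : Measurable fun r => ∫ x, exp (l * G (x, r)) ∂D := by
      have : StronglyMeasurable fun p : Z × (Fin n → Z) => exp (l * G p) :=
        (Real.measurable_exp.comp (hGm.const_mul l)).stronglyMeasurable
      exact this.integral_prod_left'.measurable
    have hinnerb : ∀ r, |∫ x, exp (l * G (x, r)) ∂D| ≤ exp (|l| * Mb) := by
      intro r
      have : ‖∫ x, exp (l * G (x, r)) ∂D‖ ≤ exp (|l| * Mb) * (D Set.univ).toReal := by
        apply norm_integral_le_of_norm_le_const
        refine ae_of_all _ fun x => ?_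
        rw [Real.norm_eq_abs, abs_of_nonneg (exp_nonneg _)]
        apply exp_le_exp.2
        refine (le_abs_self _).trans ?_
        rw [abs_mul]
        exact mul_le_mul_of_nonneg_left (hGb _) (abs_nonneg l)
      simpa [measure_univ] using this
    have step3 : ∫ r, ∫ x, exp (l * G (x, r)) ∂D ∂μn
        ≤ ∫ r, exp (l * h r + l ^ 2 * β ^ 2 / 8) ∂μn := by
      apply integral_mono (integrable_of_bdd hinnerm hinnerb) _ step2
      apply integrable_of_bdd (C := exp (|l| * Mb + l ^ 2 * β ^ 2 / 8)) (by fun_prop)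
      intro r
      rw [abs_of_nonneg (exp_nonneg _)]
      apply exp_le_exp.2
      have : l * h r ≤ |l| * Mb := by
        refine (le_abs_self _).trans ?_
        rw [abs_mul]
        exact mul_le_mul_of_nonneg_left (hhb r) (abs_nonneg l)
      linarith
    have step4 : ∫ r, exp (l * h r + l ^ 2 * β ^ 2 / 8) ∂μn
        = exp (l ^ 2 * β ^ 2 / 8) * ∫ r, exp (l * h r) ∂μn := by
      rw [← integral_const_mul]
      congr 1; funext r; rw [← exp_add]; ring_nf
    have step5 := IH h hhm Mb hhb hbdh
    have hinth : ∫ r, h r ∂μn = ∫ S, g S ∂(Measure.pi fun _ : Fin (n+1) => D) := by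
      have htr := mp.integral_comp e.measurableEmbedding G
      simp only [hG, MeasurableEquiv.symm_apply_apply] at htr
      rw [htr]
      exact (integral_prod_symm _ hGint).symm
    calc ∫ S, exp (l * g S) ∂(Measure.pi fun _ : Fin (n+1) => D)
        = ∫ r, ∫ x, exp (l * G (x, r)) ∂D ∂μn := step1
      _ ≤ ∫ r, exp (l * h r + l ^ 2 * β ^ 2 / 8) ∂μn := step3
      _ = exp (l ^ 2 * β ^ 2 / 8) * ∫ r, exp (l * h r) ∂μn := step4
      _ ≤ exp (l ^ 2 * β ^ 2 / 8) * exp (l * (∫ r, h r ∂μn) + n * l ^ 2 * β ^ 2 / 8) :=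
          mul_le_mul_of_nonneg_left step5 (exp_nonneg _)
      _ = exp (l * (∫ S, g S ∂(Measure.pi fun _ : Fin (n+1) => D))
            + (n + 1 : ℕ) * l ^ 2 * β ^ 2 / 8) := by
          rw [← exp_add, hinth]
          push_cast
          ring_nf

lemma abs_sq_of_bdd {x C : ℝ} (h : |x| ≤ C) : |x ^ 2| ≤ C ^ 2 := by
  rw [abs_of_nonneg (sq_nonneg x)]
  calc x ^ 2 = |x| ^ 2 := (sq_abs x).symm
    _ ≤ C ^ 2 := by nlinarith [abs_nonneg x]

lemma integrable_sq_of_bdd {α : Type*} [MeasurableSpace α] {ν : Measure α} [IsFiniteMeasure ν]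
    {X : α → ℝ} (hX : Measurable X) {C : ℝ} (hC : ∀ x, |X x| ≤ C) :
    Integrable (fun x => (X x) ^ 2) ν :=
  integrable_of_bdd (hX.pow_const 2) (fun x => abs_sq_of_bdd (hC x))

/-- integral of a quadratic polynomial of a bounded function -/
lemma integral_quad {α : Type*} [MeasurableSpace α] (ν : Measure α) [IsProbabilityMeasure ν]
    (X : α → ℝ) (hX : Measurable X) (C : ℝ) (hb : ∀ x, |X x| ≤ C) (a b c : ℝ) :
    ∫ x, (a * (X x) ^ 2 + b * X x + c) ∂ν
      = a * (∫ x, (X x) ^ 2 ∂ν) + b * (∫ x, X x ∂ν) + c := by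
  have hXint : Integrable X ν := integrable_of_bdd hX hb
  have hX2int : Integrable (fun x => (X x) ^ 2) ν := integrable_sq_of_bdd hX hb
  have h2 : Integrable (fun x => a * (X x) ^ 2) ν := hX2int.const_mul a
  have h3 : Integrable (fun x => b * X x) ν := hXint.const_mul b
  have h23 : Integrable (fun x => a * (X x) ^ 2 + b * X x) ν := by exact h2.add h3
  rw [integral_add h23 (integrable_const c), integral_add h2 h3,
    integral_const_mul, integral_const_mul, integral_const]
  simp [measure_univ]

/-- second moment identity -/
lemma int_sq_sub_mean {α : Type*} [MeasurableSpace α] (ν : Measure α) [IsProbabilityMeasure ν]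
    (X : α → ℝ) (hX : Measurable X) (C : ℝ) (hb : ∀ x, |X x| ≤ C) :
    ∫ x, (X x - ∫ y, X y ∂ν) ^ 2 ∂ν = (∫ x, (X x) ^ 2 ∂ν) - (∫ y, X y ∂ν) ^ 2 := by
  set m := ∫ y, X y ∂ν with hm
  have hexp : ∀ x, (X x - m) ^ 2 = 1 * (X x) ^ 2 + (-2 * m) * X x + m ^ 2 := by
    intro x; ring
  simp_rw [hexp]
  rw [integral_quad ν X hX C hb]
  rw [← hm]
  ring

lemma int_sq_shift {α : Type*} [MeasurableSpace α] (ν : Measure α) [IsProbabilityMeasure ν]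
    (X : α → ℝ) (hX : Measurable X) (C : ℝ) (hb : ∀ x, |X x| ≤ C) (c : ℝ) :
    ∫ x, (X x - c) ^ 2 ∂ν
      = (∫ x, (X x - ∫ y, X y ∂ν) ^ 2 ∂ν) + ((∫ y, X y ∂ν) - c) ^ 2 := by
  rw [int_sq_sub_mean ν X hX C hb]
  have hexp : ∀ x, (X x - c) ^ 2 = 1 * (X x) ^ 2 + (-2 * c) * X x + c ^ 2 := by
    intro x; ring
  simp_rw [hexp]
  rw [integral_quad ν X hX C hb]
  ring

/-- Jensen for squares -/
lemma sq_integral_le {α : Type*} [MeasurableSpace α] (ν : Measure α) [IsProbabilityMeasure ν]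
    (X : α → ℝ) (hX : Measurable X) (C : ℝ) (hb : ∀ x, |X x| ≤ C) :
    (∫ x, X x ∂ν) ^ 2 ≤ ∫ x, (X x) ^ 2 ∂ν := by
  have h := int_sq_sub_mean ν X hX C hb
  have h2 : 0 ≤ ∫ x, (X x - ∫ y, X y ∂ν) ^ 2 ∂ν := integral_nonneg fun x => sq_nonneg _
  linarith

/-- variance as half expected squared difference -/
lemma var_eq_half_sq_diff {α : Type*} [MeasurableSpace α] (ν : Measure α)
    [IsProbabilityMeasure ν] (X : α → ℝ) (hX : Measurable X) (C : ℝ) (hb : ∀ x, |X x| ≤ C) :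
    ∫ x, (X x - ∫ y, X y ∂ν) ^ 2 ∂ν
      = (1/2) * ∫ p, (X p.1 - X p.2) ^ 2 ∂(ν.prod ν) := by
  have hm1 : Measurable fun p : α × α => X p.1 := hX.comp measurable_fst
  have hm2 : Measurable fun p : α × α => X p.2 := hX.comp measurable_snd
  have hint : Integrable (fun p : α × α => (X p.1 - X p.2) ^ 2) (ν.prod ν) := by
    apply integrable_of_bdd ((hm1.sub hm2).pow_const 2) (C := (C + C) ^ 2)
    intro p
    apply abs_sq_of_bdd
    calc |X p.1 - X p.2| ≤ |X p.1| + |X p.2| := abs_sub _ _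
      _ ≤ C + C := by linarith [hb p.1, hb p.2]
  have hfub : ∫ p, (X p.1 - X p.2) ^ 2 ∂(ν.prod ν)
      = ∫ x, ∫ y, (X x - X y) ^ 2 ∂ν ∂ν := integral_prod _ hint
  have hinner : ∀ x, ∫ y, (X x - X y) ^ 2 ∂ν
      = 1 * (∫ y, (X y) ^ 2 ∂ν) + (-2 * X x) * (∫ y, X y ∂ν) + (X x) ^ 2 := by
    intro x
    have hexp : ∀ y, (X x - X y) ^ 2 = 1 * (X y) ^ 2 + (-2 * X x) * X y + (X x) ^ 2 := by
      intro y; ring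
    simp_rw [hexp]
    rw [integral_quad ν X hX C hb]
  rw [hfub]
  simp_rw [hinner]
  have houter : ∀ x : α, 1 * (∫ y, (X y) ^ 2 ∂ν) + (-2 * X x) * (∫ y, X y ∂ν) + (X x) ^ 2
      = 1 * (X x) ^ 2 + (-2 * (∫ y, X y ∂ν)) * X x + (∫ y, (X y) ^ 2 ∂ν) := by
    intro x; ring
  simp_rw [houter]
  rw [integral_quad ν X hX C hb]
  rw [int_sq_sub_mean ν X hX C hb]
  ring

/-- Efron–Stein style variance bound for vector-valued bounded-difference functions. -/
lemma efron_stein {Z : Type*} [MeasurableSpace Z] (D : Measure Z) [IsProbabilityMeasure D]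
    (β : ℝ) {d : ℕ} :
    ∀ (n : ℕ) (f : (Fin n → Z) → Fin d → ℝ), (∀ j, Measurable fun S => f S j) →
    ∀ (Mb : ℝ), (∀ S j, |f S j| ≤ Mb) →
    (∀ (i : Fin n) (S S' : Fin n → Z), (∀ j, j ≠ i → S j = S' j) →
      ∑ j, (f S j - f S' j) ^ 2 ≤ β ^ 2) →
    ∑ j, ∫ S, (f S j - ∫ S', f S' j ∂(Measure.pi fun _ : Fin n => D)) ^ 2
        ∂(Measure.pi fun _ : Fin n => D) ≤ n * β ^ 2 / 2 := by
  intro n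
  induction n with
  | zero =>
    intro f hm Mb hb hbd
    have hconst : ∀ (S : Fin 0 → Z) j, f S j = f default j := fun S j =>
      congrFun (congrArg f (Subsingleton.elim S default)) j
    have : ∀ j, ∫ S, (f S j - ∫ S', f S' j ∂(Measure.pi fun _ : Fin 0 => D)) ^ 2
        ∂(Measure.pi fun _ : Fin 0 => D) = 0 := by
      intro j
      simp_rw [hconst]
      rw [integral_const, integral_const]
      simp [measure_univ]
    simp only [this]
    simp
  | succ n IH =>
    intro f hm Mb hb hbd
    set μ1 : Measure (Fin (n+1) → Z) := Measure.pi fun _ : Fin (n+1) => D with hμ1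
    set μn : Measure (Fin n → Z) := Measure.pi fun _ : Fin n => D with hμn
    set e := MeasurableEquiv.piFinSuccAbove (fun _ : Fin (n+1) => Z) 0 with he
    have mp : MeasurePreserving e μ1 (D.prod μn) :=
      measurePreserving_piFinSuccAbove (fun _ => D) 0
    set G : Fin d → Z × (Fin n → Z) → ℝ := fun j p => f (e.symm p) j with hG
    have hGm : ∀ j, Measurable (G j) := fun j => (hm j).comp e.symm.measurable
    have hGb : ∀ j p, |G j p| ≤ Mb := fun j p => hb _ _
    -- coordinates helpers (d ≥ 1 implied by usage; fine)
    have hsymm0 : ∀ (x : Z) (r : Fin n → Z), e.symm (x, r) 0 = x := by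
      intro x r
      simp [he, MeasurableEquiv.piFinSuccAbove, Fin.insertNthEquiv]
    have hsymms : ∀ (x : Z) (r : Fin n → Z) (k : Fin n),
        e.symm (x, r) (Fin.succAbove 0 k) = r k := by
      intro x r k
      simp [he, MeasurableEquiv.piFinSuccAbove, Fin.insertNthEquiv]
    set h : (Fin n → Z) → Fin d → ℝ := fun r j => ∫ x, G j (x, r) ∂D with hh
    have hhm : ∀ j, Measurable fun r => h r j := by
      intro j
      exact ((hGm j).stronglyMeasurable.integral_prod_left').measurable
    have hhb : ∀ r j, |h r j| ≤ Mb := by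
      intro r j
      have : ‖∫ x, G j (x, r) ∂D‖ ≤ Mb * (D Set.univ).toReal :=
        norm_integral_le_of_norm_le_const (ae_of_all _ fun x => by simpa using hGb j (x, r))
      simpa [measure_univ] using this
    set c : Fin d → ℝ := fun j => ∫ S, f S j ∂μ1 with hc
    have hcb : ∀ j, |c j| ≤ Mb := by
      intro j
      have : ‖∫ S, f S j ∂μ1‖ ≤ Mb * (μ1 Set.univ).toReal :=
        norm_integral_le_of_norm_le_const (ae_of_all _ fun S => by simpa using hb S j)
      simpa [measure_univ] using this
    -- x-section measurability
    have hsec : ∀ j (r : Fin n → Z), Measurable fun x => G j (x, r) :=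
      fun j r => (hGm j).comp (measurable_id.prodMk measurable_const)
    -- h r j is the mean of the section
    -- Step A: transfer and Fubini
    have stepA : ∀ j, ∫ S, (f S j - c j) ^ 2 ∂μ1
        = ∫ r, ∫ x, (G j (x, r) - c j) ^ 2 ∂D ∂μn := by
      intro j
      have htr := mp.integral_comp e.measurableEmbedding (fun p => (G j p - c j) ^ 2)
      simp only [hG, MeasurableEquiv.symm_apply_apply] at htr
      rw [htr]
      apply integral_prod_symm
      apply integrable_of_bdd (((hGm j).sub measurable_const).pow_const 2)
        (C := (Mb + Mb) ^ 2)
      intro p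
      apply abs_sq_of_bdd
      calc |G j p - c j| ≤ |G j p| + |c j| := abs_sub _ _
        _ ≤ Mb + Mb := add_le_add (hGb j p) (hcb j)
    -- Step B: per-section decomposition
    have stepB : ∀ j (r : Fin n → Z), ∫ x, (G j (x, r) - c j) ^ 2 ∂D
        = (∫ x, (G j (x, r) - h r j) ^ 2 ∂D) + (h r j - c j) ^ 2 := by
      intro j r
      exact int_sq_shift D _ (hsec j r) Mb (fun x => hGb j _) (c j)
    -- V j r : conditional variance
    set V : Fin d → (Fin n → Z) → ℝ := fun j r => ∫ x, (G j (x, r) - h r j) ^ 2 ∂D with hV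
    have hVm : ∀ j, Measurable (V j) := by
      intro j
      have : StronglyMeasurable fun p : Z × (Fin n → Z) => (G j p - h p.2 j) ^ 2 :=
        (((hGm j).sub ((hhm j).comp measurable_snd)).pow_const 2).stronglyMeasurable
      exact this.integral_prod_left'.measurable
    have hVb : ∀ j r, |V j r| ≤ (Mb + Mb) ^ 2 := by
      intro j r
      have : ‖∫ x, (G j (x, r) - h r j) ^ 2 ∂D‖ ≤ (Mb + Mb) ^ 2 * (D Set.univ).toReal := by
        apply norm_integral_le_of_norm_le_const
        refine ae_of_all _ fun x => ?_
        rw [Real.norm_eq_abs]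
        apply abs_sq_of_bdd
        calc |G j (x, r) - h r j| ≤ |G j (x, r)| + |h r j| := abs_sub _ _
          _ ≤ Mb + Mb := add_le_add (hGb j _) (hhb r j)
      simpa [measure_univ] using this
    have hVint : ∀ j, Integrable (V j) μn := fun j => integrable_of_bdd (hVm j) (hVb j)
    have hHCint : ∀ j, Integrable (fun r => (h r j - c j) ^ 2) μn := by
      intro j
      apply integrable_of_bdd (((hhm j).sub measurable_const).pow_const 2)
        (C := (Mb + Mb) ^ 2)
      intro r
      apply abs_sq_of_bdd
      calc |h r j - c j| ≤ |h r j| + |c j| := abs_sub _ _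
        _ ≤ Mb + Mb := add_le_add (hhb r j) (hcb j)
    -- Step C
    have stepC : ∀ j, ∫ S, (f S j - c j) ^ 2 ∂μ1
        = (∫ r, V j r ∂μn) + ∫ r, (h r j - c j) ^ 2 ∂μn := by
      intro j
      rw [stepA j]
      simp_rw [stepB j]
      rw [integral_add (hVint j) (hHCint j)]
    -- Step D : sum of conditional variances bounded pointwise
    have stepD : ∀ r : Fin n → Z, ∑ j, V j r ≤ β ^ 2 / 2 := by
      intro r
      have hvar : ∀ j, V j r
          = (1/2) * ∫ p, (G j (p.1, r) - G j (p.2, r)) ^ 2 ∂(D.prod D) := by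
        intro j
        exact var_eq_half_sq_diff D _ (hsec j r) Mb (fun x => hGb j _)
      simp_rw [hvar]
      rw [← Finset.mul_sum]
      have hintj : ∀ j : Fin d, Integrable
          (fun p : Z × Z => (G j (p.1, r) - G j (p.2, r)) ^ 2) (D.prod D) := by
        intro j
        apply integrable_of_bdd
          (((((hsec j r).comp measurable_fst)).sub ((hsec j r).comp measurable_snd)).pow_const 2)
          (C := (Mb + Mb) ^ 2)
        intro p
        apply abs_sq_of_bdd
        calc |G j (p.1, r) - G j (p.2, r)| ≤ |G j (p.1, r)| + |G j (p.2, r)| := abs_sub _ _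
          _ ≤ Mb + Mb := add_le_add (hGb j _) (hGb j _)
      rw [← integral_finset_sum _ (fun j _ => hintj j)]
      have hptbd : ∀ p : Z × Z, ∑ j, (G j (p.1, r) - G j (p.2, r)) ^ 2 ≤ β ^ 2 := by
        intro p
        apply hbd 0
        intro k hk
        rcases Fin.eq_zero_or_eq_succ k with rfl | ⟨k', rfl⟩
        · exact absurd rfl hk
        · have hsa : Fin.succAbove (0 : Fin (n+1)) k' = k'.succ := rfl
          rw [← hsa, hsymms, hsymms]
      have : ∫ p, (∑ j, (G j (p.1, r) - G j (p.2, r)) ^ 2) ∂(D.prod D)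
          ≤ ∫ _p, β ^ 2 ∂(D.prod D) :=
        integral_mono (integrable_finset_sum _ (fun j _ => hintj j)) (integrable_const _) hptbd
      rw [integral_const] at this
      simp only [measure_univ, probReal_univ, ENNReal.toReal_one, smul_eq_mul, one_mul] at this
      linarith
    -- Step E : apply IH to h
    have hbdh : ∀ (i : Fin n) (r r' : Fin n → Z), (∀ j, j ≠ i → r j = r' j) →
        ∑ j, (h r j - h r' j) ^ 2 ≤ β ^ 2 := by
      intro i r r' hje
      have hptbd : ∀ x, ∑ j, (G j (x, r) - G j (x, r')) ^ 2 ≤ β ^ 2 := by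
        intro x
        apply hbd (Fin.succAbove 0 i)
        intro k hk
        rcases Fin.eq_zero_or_eq_succ k with rfl | ⟨k', rfl⟩
        · rw [hsymm0, hsymm0]
        · have hsa : ∀ m : Fin n, Fin.succAbove (0 : Fin (n+1)) m = m.succ := fun _ => rfl
          rw [← hsa k', hsymms, hsymms]
          apply hje
          intro hkk
          exact hk (by rw [hkk, hsa])
      have hdiffint : ∀ j : Fin d, Integrable (fun x => (G j (x, r) - G j (x, r')) ^ 2) D := by
        intro j
        apply integrable_of_bdd (((hsec j r).sub (hsec j r')).pow_const 2)
          (C := (Mb + Mb) ^ 2)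
        intro x
        apply abs_sq_of_bdd
        calc |G j (x, r) - G j (x, r')| ≤ |G j (x, r)| + |G j (x, r')| := abs_sub _ _
          _ ≤ Mb + Mb := add_le_add (hGb j _) (hGb j _)
      have hjen : ∀ j : Fin d, (h r j - h r' j) ^ 2 ≤ ∫ x, (G j (x, r) - G j (x, r')) ^ 2 ∂D := by
        intro j
        have hint1 : Integrable (fun x => G j (x, r)) D :=
          integrable_of_bdd (hsec j r) (fun x => hGb j _)
        have hint2 : Integrable (fun x => G j (x, r')) D :=
          integrable_of_bdd (hsec j r') (fun x => hGb j _)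
        have hdiff : h r j - h r' j = ∫ x, (G j (x, r) - G j (x, r')) ∂D := by
          rw [integral_sub hint1 hint2]
        rw [hdiff]
        apply sq_integral_le D _ ((hsec j r).sub (hsec j r')) (Mb + Mb)
        intro x
        calc |G j (x, r) - G j (x, r')| ≤ |G j (x, r)| + |G j (x, r')| := abs_sub _ _
          _ ≤ Mb + Mb := add_le_add (hGb j _) (hGb j _)
      calc ∑ j, (h r j - h r' j) ^ 2 ≤ ∑ j, ∫ x, (G j (x, r) - G j (x, r')) ^ 2 ∂D :=
            Finset.sum_le_sum fun j _ => hjen j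
        _ = ∫ x, (∑ j, (G j (x, r) - G j (x, r')) ^ 2) ∂D :=
            (integral_finset_sum _ (fun j _ => hdiffint j)).symm
        _ ≤ ∫ _x, β ^ 2 ∂D := integral_mono
            (integrable_finset_sum _ (fun j _ => hdiffint j)) (integrable_const _) hptbd
        _ = β ^ 2 := by simp [measure_univ]
    have stepE := IH h hhm Mb hhb hbdh
    -- mean of h equals c
    have hmean : ∀ j, ∫ r, h r j ∂μn = c j := by
      intro j
      have htr := mp.integral_comp e.measurableEmbedding (G j)
      simp only [hG, MeasurableEquiv.symm_apply_apply] at htr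
      show ∫ r, h r j ∂μn = ∫ S, f S j ∂μ1
      rw [htr]
      exact (integral_prod_symm _ (integrable_of_bdd (hGm j) (hGb j))).symm
    -- assemble
    calc ∑ j, ∫ S, (f S j - ∫ S', f S' j ∂μ1) ^ 2 ∂μ1
        = ∑ j, ∫ S, (f S j - c j) ^ 2 ∂μ1 := rfl
      _
        = ∑ j, ((∫ r, V j r ∂μn) + ∫ r, (h r j - c j) ^ 2 ∂μn) := by
          exact Finset.sum_congr rfl fun j _ => stepC j
      _ = (∑ j, ∫ r, V j r ∂μn) + ∑ j, ∫ r, (h r j - c j) ^ 2 ∂μn :=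
          Finset.sum_add_distrib
      _ ≤ β ^ 2 / 2 + n * β ^ 2 / 2 := by
          apply add_le_add
          · rw [← integral_finset_sum _ (fun j _ => hVint j)]
            calc ∫ r, (∑ j, V j r) ∂μn ≤ ∫ _r, β ^ 2 / 2 ∂μn :=
                  integral_mono (integrable_finset_sum _ (fun j _ => hVint j))
                    (integrable_const _) stepD
              _ = β ^ 2 / 2 := by simp [measure_univ]
          · have := stepE
            simp_rw [hmean] at this
            exact this
      _ = (n + 1 : ℕ) * β ^ 2 / 2 := by push_cast; ring

lemma sqrt_sum_sq_eq_norm {d : ℕ} (x : Fin d → ℝ) :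
    Real.sqrt (∑ j, (x j) ^ 2) = ‖(WithLp.equiv 2 (Fin d → ℝ)).symm x‖ := by
  rw [EuclideanSpace.norm_eq]
  congr 1
  apply Finset.sum_congr rfl
  intro j _
  rw [Real.norm_eq_abs, sq_abs]
  rfl

lemma sqrt_sum_sq_triangle {d : ℕ} (a b c : Fin d → ℝ) :
    Real.sqrt (∑ j, (a j - c j) ^ 2)
      ≤ Real.sqrt (∑ j, (a j - b j) ^ 2) + Real.sqrt (∑ j, (b j - c j) ^ 2) := by
  set A := (WithLp.equiv 2 (Fin d → ℝ)).symm a with hA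
  set B := (WithLp.equiv 2 (Fin d → ℝ)).symm b with hB
  set C := (WithLp.equiv 2 (Fin d → ℝ)).symm c with hC
  have e1 : Real.sqrt (∑ j, (a j - c j) ^ 2) = ‖A - C‖ := sqrt_sum_sq_eq_norm _
  have e2 : Real.sqrt (∑ j, (a j - b j) ^ 2) = ‖A - B‖ := sqrt_sum_sq_eq_norm _
  have e3 : Real.sqrt (∑ j, (b j - c j) ^ 2) = ‖B - C‖ := sqrt_sum_sq_eq_norm _
  rw [e1, e2, e3]
  calc ‖A - C‖ = ‖(A - B) + (B - C)‖ := by rw [sub_add_sub_cancel]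
    _ ≤ ‖A - B‖ + ‖B - C‖ := norm_add_le _ _

lemma coord_le_sqrt_sum_sq {d : ℕ} (x : Fin d → ℝ) (j : Fin d) :
    |x j| ≤ Real.sqrt (∑ i, (x i) ^ 2) := by
  rw [← Real.sqrt_sq_eq_abs (x j)]
  apply Real.sqrt_le_sqrt
  exact Finset.single_le_sum (fun i _ => sq_nonneg (x i)) (Finset.mem_univ j)

lemma sqrt_sum_sq_le_of_bdd {d : ℕ} (x : Fin d → ℝ) (C : ℝ) (hC : 0 ≤ C)
    (h : ∀ j, |x j| ≤ C) : Real.sqrt (∑ j, (x j) ^ 2) ≤ Real.sqrt d * C := by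
  have : ∑ j, (x j) ^ 2 ≤ (d : ℝ) * C ^ 2 := by
    calc ∑ j, (x j) ^ 2 ≤ ∑ _j : Fin d, C ^ 2 :=
          Finset.sum_le_sum fun j _ => by
            rw [← sq_abs (x j)]; exact pow_le_pow_left₀ (abs_nonneg _) (h j) 2
      _ = (d : ℝ) * C ^ 2 := by
          rw [Finset.sum_const, Finset.card_univ, Fintype.card_fin, nsmul_eq_mul]
  calc Real.sqrt (∑ j, (x j) ^ 2) ≤ Real.sqrt ((d : ℝ) * C ^ 2) := Real.sqrt_le_sqrt this
    _ = Real.sqrt d * C := by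
        rw [Real.sqrt_mul (Nat.cast_nonneg d), Real.sqrt_sq hC]

lemma le_of_sq_le_sq' {a b : ℝ} (ha : 0 ≤ a) (hb : 0 ≤ b) (h : a ^ 2 ≤ b ^ 2) : a ≤ b := by
  nlinarith

lemma lt_of_sq_lt_sq'' {a b : ℝ} (hb : 0 ≤ b) (h : a ^ 2 < b ^ 2) (ha : 0 ≤ a) : a < b := by
  nlinarith

lemma key2_lemma (A u : ℝ) (hA : 0 < A) :
    A * (u ^ 2 - Real.log 2) ≤ 2 * (A * (2 * u ^ 2) - 2 * (A * u) + A / 2) := by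
  have hlog2 := Real.log_two_gt_d9
  nlinarith [mul_nonneg hA.le (sq_nonneg (3 * u - 2))]

lemma sum_le_sq_of_sqrt_le {x β : ℝ} (hx : 0 ≤ x) (hβ : 0 ≤ β) (h : Real.sqrt x ≤ β) :
    x ≤ β ^ 2 := by
  nlinarith [Real.sq_sqrt hx, Real.sqrt_nonneg x]

set_option maxHeartbeats 1000000 in
/-- **Concentration of a vector-valued function with bounded differences (Lemma 11).**
If changing a single coordinate of the dataset changes `f` by at most `β` in Euclidean norm,
then with probability at least `1 - δ` over `S ~ D^n`,
`‖f(S) - E[f]‖ < β sqrt(2 n ln(2/δ))`. -/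
theorem bounded_differences_concentration
    {Z : Type*} [MeasurableSpace Z] {n d : ℕ} (hn : 1 ≤ n)
    (D : Measure Z) [IsProbabilityMeasure D]
    (f : (Fin n → Z) → Fin d → ℝ) (hf : Measurable f)
    (β : ℝ) (hβ : 0 < β)
    (hbd : ∀ S S' : Fin n → Z,
      (∃ i₀, S i₀ ≠ S' i₀ ∧ ∀ j, j ≠ i₀ → S j = S' j) →
      Real.sqrt (∑ j, (f S j - f S' j) ^ 2) ≤ β)
    (δ : ℝ) (hδ : δ ∈ Set.Ioo (0 : ℝ) 1) :
    ENNReal.ofReal (1 - δ) ≤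
      (Measure.pi fun _ : Fin n => D)
        {S | Real.sqrt (∑ j, (f S j
              - ∫ S', f S' j ∂(Measure.pi fun _ : Fin n => D)) ^ 2)
            < β * Real.sqrt (2 * n * Real.log (2 / δ))} := by
  obtain ⟨hδ0, hδ1⟩ := hδ
  set μ : Measure (Fin n → Z) := Measure.pi fun _ : Fin n => D with hμ
  haveI : IsProbabilityMeasure μ := by rw [hμ]; infer_instance
  haveI : Nonempty Z := nonempty_of_prob D
  have hmj : ∀ j, Measurable fun S => f S j := fun j => (measurable_pi_apply j).comp hf
  -- telescoping bound on distances
  have key : ∀ (k : ℕ) (S S' : Fin n → Z), (∀ j : Fin n, k ≤ (j : ℕ) → S j = S' j) →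
      Real.sqrt (∑ j, (f S j - f S' j) ^ 2) ≤ k * β := by
    intro k
    induction k with
    | zero =>
      intro S S' hag
      have hSS : S = S' := funext fun j => hag j (Nat.zero_le _)
      subst hSS
      simp
    | succ k IH =>
      intro S S' hag
      set T : Fin n → Z := fun j => if (j : ℕ) = k then S j else S' j with hT
      have h1 : Real.sqrt (∑ j, (f S j - f T j) ^ 2) ≤ k * β := by
        apply IH
        intro j hj
        by_cases hjk : (j : ℕ) = k
        · simp [hT, hjk]
        · simp only [hT, hjk, if_false]
          exact hag j (by omega)
      have h2 : Real.sqrt (∑ j, (f T j - f S' j) ^ 2) ≤ β := by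
        by_cases hTS : T = S'
        · rw [hTS]; simp [hβ.le]
        · apply hbd
          obtain ⟨j0, hj0⟩ := Function.ne_iff.1 hTS
          have hj0k : (j0 : ℕ) = k := by
            by_contra hne
            exact hj0 (by simp [hT, hne])
          refine ⟨j0, hj0, ?_⟩
          intro j hj
          have hjk : (j : ℕ) ≠ k := fun hc => hj (Fin.ext (by rw [hc, hj0k]))
          simp [hT, hjk]
      calc Real.sqrt (∑ j, (f S j - f S' j) ^ 2)
          ≤ Real.sqrt (∑ j, (f S j - f T j) ^ 2)
            + Real.sqrt (∑ j, (f T j - f S' j) ^ 2) :=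
            sqrt_sum_sq_triangle (f S) (f T) (f S')
        _ ≤ k * β + β := add_le_add h1 h2
        _ = (k + 1 : ℕ) * β := by push_cast; ring
  have hdist : ∀ S S', Real.sqrt (∑ j, (f S j - f S' j) ^ 2) ≤ n * β := fun S S' =>
    key n S S' (fun j hj => absurd hj (not_le.2 j.isLt))
  -- boundedness of f
  set S₀ : Fin n → Z := fun _ => Classical.arbitrary Z with hS₀
  set Mb : ℝ := Real.sqrt (∑ j, (f S₀ j) ^ 2) + n * β with hMbdef
  have hMb0 : 0 ≤ Mb := by
    rw [hMbdef]; positivity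
  have hb : ∀ S j, |f S j| ≤ Mb := by
    intro S j
    have h1 : |f S j| ≤ |f S₀ j| + |f S j - f S₀ j| := by
      have := abs_add_le (f S₀ j) (f S j - f S₀ j)
      simpa using this
    have h2 : |f S₀ j| ≤ Real.sqrt (∑ i, (f S₀ i) ^ 2) := coord_le_sqrt_sum_sq (f S₀) j
    have h3 : |f S j - f S₀ j| ≤ Real.sqrt (∑ i, (f S i - f S₀ i) ^ 2) :=
      coord_le_sqrt_sum_sq (fun i => f S i - f S₀ i) j
    have h4 := hdist S S₀
    rw [hMbdef]
    linarith only [h1, h2, h3, h4]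
  -- the centers
  set c : Fin d → ℝ := fun j => ∫ S', f S' j ∂μ with hcdef
  have hceq : ∀ j, c j = ∫ S', f S' j ∂μ := fun j => rfl
  have hcb : ∀ j, |c j| ≤ Mb := by
    intro j
    have : ‖∫ S', f S' j ∂μ‖ ≤ Mb * (μ Set.univ).toReal :=
      norm_integral_le_of_norm_le_const (ae_of_all _ fun S => by simpa using hb S j)
    simpa [measure_univ] using this
  -- g
  set g : (Fin n → Z) → ℝ := fun S => Real.sqrt (∑ j, (f S j - c j) ^ 2) with hgdef
  have hsm : Measurable fun S => ∑ j, (f S j - c j) ^ 2 :=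
    Finset.measurable_sum _ (fun j _ => ((hmj j).sub measurable_const).pow_const 2)
  have hgm : Measurable g := Real.continuous_sqrt.measurable.comp hsm
  set Mg : ℝ := Real.sqrt d * (2 * Mb) with hMgdef
  have hg0 : ∀ S, 0 ≤ g S := fun S => Real.sqrt_nonneg _
  have hgb : ∀ S, |g S| ≤ Mg := by
    intro S
    rw [abs_of_nonneg (hg0 S), hgdef, hMgdef]
    apply sqrt_sum_sq_le_of_bdd _ (2 * Mb) (by linarith)
    intro j
    calc |f S j - c j| ≤ |f S j| + |c j| := abs_sub _ _
      _ ≤ 2 * Mb := by linarith [hb S j, hcb j]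
  -- bounded differences of g
  have hgbd : ∀ (i : Fin n) (S S' : Fin n → Z), (∀ j, j ≠ i → S j = S' j) →
      g S - g S' ≤ β := by
    intro i S S' hag
    have htri := sqrt_sum_sq_triangle (f S) (f S') c
    have hb2 : Real.sqrt (∑ j, (f S j - f S' j) ^ 2) ≤ β := by
      by_cases hSS : S = S'
      · subst hSS; simp [hβ.le]
      · apply hbd
        refine ⟨i, ?_, hag⟩
        intro hcon
        apply hSS
        funext j
        by_cases hji : j = i
        · rw [hji]; exact hcon
        · exact hag j hji
    have : g S ≤ Real.sqrt (∑ j, (f S j - f S' j) ^ 2) + g S' := htri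
    linarith only [this, hb2]
  -- squared-diff bound for Efron-Stein
  have hbd2 : ∀ (i : Fin n) (S S' : Fin n → Z), (∀ j, j ≠ i → S j = S' j) →
      ∑ j, (f S j - f S' j) ^ 2 ≤ β ^ 2 := by
    intro i S S' hag
    by_cases hSS : S = S'
    · subst hSS; simp; positivity
    · have hs := hbd S S' ⟨i, by
        intro hcon
        apply hSS
        funext j
        by_cases hji : j = i
        · rw [hji]; exact hcon
        · exact hag j hji, hag⟩
      have hnn : 0 ≤ ∑ j, (f S j - f S' j) ^ 2 :=
        Finset.sum_nonneg fun j _ => sq_nonneg _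
      exact sum_le_sq_of_sqrt_le hnn hβ.le hs
  have hES := efron_stein D β n f hmj Mb hb hbd2
  simp only [← hceq] at hES
  -- mean of g
  set Eg : ℝ := ∫ S, g S ∂μ with hEgdef
  have hEg0 : 0 ≤ Eg := integral_nonneg hg0
  have hg2 : ∀ S, (g S) ^ 2 = ∑ j, (f S j - c j) ^ 2 := fun S =>
    Real.sq_sqrt (Finset.sum_nonneg fun j _ => sq_nonneg _)
  have hjint : ∀ j, Integrable (fun S => (f S j - c j) ^ 2) μ := by
    intro j
    apply integrable_of_bdd (((hmj j).sub measurable_const).pow_const 2) (C := (2 * Mb) ^ 2)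
    intro S
    rw [abs_of_nonneg (sq_nonneg _), ← sq_abs]
    have : |f S j - c j| ≤ 2 * Mb := by
      calc |f S j - c j| ≤ |f S j| + |c j| := abs_sub _ _
        _ ≤ 2 * Mb := by linarith [hb S j, hcb j]
    change |f S j - c j| ^ 2 ≤ (2 * Mb) ^ 2
    nlinarith [abs_nonneg (f S j - c j)]
  have hEgsq : Eg ^ 2 ≤ n * β ^ 2 / 2 := by
    have h1 : Eg ^ 2 ≤ ∫ S, (g S) ^ 2 ∂μ := sq_integral_le μ g hgm Mg hgb
    have h2 : ∫ S, (g S) ^ 2 ∂μ = ∑ j, ∫ S, (f S j - c j) ^ 2 ∂μ := by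
      simp_rw [hg2]
      exact integral_finset_sum _ (fun j _ => hjint j)
    linarith only [hES, h1, h2.le, h2.ge]
  -- numeric setup
  set L : ℝ := Real.log (2 / δ) with hLdef
  have hlog2 : (0.6931471803 : ℝ) < Real.log 2 := Real.log_two_gt_d9
  have hL2 : Real.log 2 ≤ L := by
    rw [hLdef]
    apply Real.log_le_log (by norm_num)
    rw [le_div_iff₀ hδ0]
    linarith
  have hL0 : 0 < L := by linarith only [hlog2, hL2]
  set A : ℝ := (n : ℝ) * β ^ 2 with hAdef
  have hn1 : (1 : ℝ) ≤ (n : ℝ) := by exact_mod_cast hn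
  have hA : 0 < A := by rw [hAdef]; positivity
  set s0 : ℝ := Real.sqrt (A / 2) with hs0def
  have hs00 : 0 ≤ s0 := Real.sqrt_nonneg _
  have hs0sq : s0 ^ 2 = A / 2 := Real.sq_sqrt (by positivity)
  set T : ℝ := β * Real.sqrt (2 * n * L) with hTdef
  have hT0 : 0 ≤ T := by rw [hTdef]; positivity
  have hTsq : T ^ 2 = β ^ 2 * (2 * n * L) := by
    rw [hTdef, mul_pow, Real.sq_sqrt (by positivity)]
  set u : ℝ := Real.sqrt L with hudef
  have hu0 : 0 ≤ u := Real.sqrt_nonneg _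
  have hu2 : u ^ 2 = L := Real.sq_sqrt hL0.le
  have hw : T * s0 = A * u := by
    have e1 : T * s0 = Real.sqrt (T ^ 2 * s0 ^ 2) := by
      rw [Real.sqrt_mul (sq_nonneg T), Real.sqrt_sq hT0, Real.sqrt_sq hs00]
    have e2 : A * u = Real.sqrt (A ^ 2 * L) := by
      rw [hudef, ← Real.sqrt_sq hA.le, ← Real.sqrt_mul (sq_nonneg A)]
      rw [Real.sqrt_sq hA.le]
    rw [e1, e2, hTsq, hs0sq]
    congr 1
    rw [hAdef]
    ring
  have hEgs0 : Eg ≤ s0 := by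
    have h : Eg ^ 2 ≤ s0 ^ 2 := by rw [hs0sq]; linarith only [hEgsq]
    exact le_of_sq_le_sq' hEg0 hs00 h
  have hst : s0 < T := by
    have h12 : (1:ℝ)/2 < 2 * L := by linarith only [hlog2, hL2]
    have hsq : s0 ^ 2 < T ^ 2 := by
      calc s0 ^ 2 = A * (1/2) := by rw [hs0sq]; ring
        _ < A * (2 * L) := mul_lt_mul_of_pos_left h12 hA
        _ = T ^ 2 := by rw [hTsq, hAdef]; ring
    exact lt_of_sq_lt_sq'' hT0 hsq hs00
  set t : ℝ := T - s0 with htdef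
  have ht : 0 < t := by rw [htdef]; linarith only [hst]
  set l : ℝ := 4 * t / A with hldef
  have hl : 0 < l := by rw [hldef]; positivity
  -- integrability of exp (l * g)
  have hintexp : Integrable (fun S => exp (l * g S)) μ := by
    apply integrable_of_bdd (C := exp (|l| * Mg)) (by fun_prop)
    intro S
    rw [abs_of_nonneg (exp_nonneg _)]
    apply exp_le_exp.2
    refine (le_abs_self _).trans ?_
    rw [abs_mul]
    exact mul_le_mul_of_nonneg_left (hgb S) (abs_nonneg l)
  -- Chernoff
  have hcher := ProbabilityTheory.measure_ge_le_exp_mul_mgf (μ := μ) (X := g) T hl.le hintexp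
  have hmgfle : ProbabilityTheory.mgf g μ l
      ≤ exp (l * Eg + n * l ^ 2 * β ^ 2 / 8) := by
    have := mcdiarmid_mgf D β hβ l n g hgm Mg hgb hgbd
    simpa [ProbabilityTheory.mgf] using this
  have hexpo : l * s0 - l * T + (n : ℝ) * l ^ 2 * β ^ 2 / 8 = -(2 * t ^ 2 / A) := by
    have hAne : A ≠ 0 := ne_of_gt hA
    have hnl : (n : ℝ) * l ^ 2 * β ^ 2 = A * l ^ 2 := by rw [hAdef]; ring
    have hts : l * s0 - l * T = -(l * t) := by rw [htdef]; ring
    rw [hts, hnl, hldef]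
    field_simp
    ring
  have hfin : exp (-(2 * t ^ 2 / A)) ≤ δ := by
    rw [← Real.exp_log hδ0]
    apply Real.exp_le_exp.2
    have hlogδ : Real.log δ = Real.log 2 - L := by
      rw [hLdef, Real.log_div (by norm_num) (ne_of_gt hδ0)]
      ring
    rw [hlogδ]
    have ht2 : t ^ 2 = A * (2 * L) - 2 * (A * u) + A / 2 := by
      have hx : t ^ 2 = T ^ 2 - 2 * (T * s0) + s0 ^ 2 := by rw [htdef]; ring
      rw [hx, hTsq, hs0sq, hw, hAdef]
      ring
    have key2 : A * (L - Real.log 2) ≤ 2 * t ^ 2 := by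
      rw [ht2, ← hu2]
      exact key2_lemma A u hA
    have h3 : L - Real.log 2 ≤ 2 * t ^ 2 / A :=
      (le_div_iff₀ hA).2 (by linarith only [key2])
    linarith only [h3]
  -- combine
  set B : Set (Fin n → Z) := {S | T ≤ g S} with hBdef
  have hBmeas : MeasurableSet B := measurableSet_le measurable_const hgm
  have hto : (μ B).toReal ≤ δ := by
    calc (μ B).toReal ≤ exp (-l * T) * ProbabilityTheory.mgf g μ l := hcher
      _ ≤ exp (-l * T) * exp (l * Eg + n * l ^ 2 * β ^ 2 / 8) :=
          mul_le_mul_of_nonneg_left hmgfle (exp_nonneg _)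
      _ = exp (l * Eg - l * T + n * l ^ 2 * β ^ 2 / 8) := by rw [← exp_add]; ring_nf
      _ ≤ exp (l * s0 - l * T + n * l ^ 2 * β ^ 2 / 8) := by
          apply exp_le_exp.2
          have : l * Eg ≤ l * s0 := mul_le_mul_of_nonneg_left hEgs0 hl.le
          linarith only [this]
      _ = exp (-(2 * t ^ 2 / A)) := by rw [hexpo]
      _ ≤ δ := hfin
  have hμB : μ B ≤ ENNReal.ofReal δ :=
    (ENNReal.le_ofReal_iff_toReal_le (measure_ne_top μ B) hδ0.le).2 hto
  have hgoal : ENNReal.ofReal (1 - δ) ≤ μ Bᶜ := by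
    rw [prob_compl_eq_one_sub hBmeas]
    calc ENNReal.ofReal (1 - δ) = 1 - ENNReal.ofReal δ := by
          rw [ENNReal.ofReal_sub _ hδ0.le, ENNReal.ofReal_one]
      _ ≤ 1 - μ B := tsub_le_tsub_left hμB 1
  have hset : {S | Real.sqrt (∑ j, (f S j - ∫ S', f S' j ∂μ) ^ 2)
      < β * Real.sqrt (2 * n * Real.log (2 / δ))} = Bᶜ := by
    ext S
    simp only [hBdef, Set.mem_compl_iff, Set.mem_setOf_eq, not_le]
    exact Iff.rfl
  rw [← hset] at hgoal
  exact hgoal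
end

section
/- Let ℓ : ℝ^d × Z → ℝ≥0 be a loss function that is convex and L-Lipschitz with respect to its first argument, λ > 0, and for a dataset S = (z_1, …, z_n) ∈ Z^n let θ̂_S be a minimizer of F_S(θ) = (1/n) Σ_{i=1}^n ℓ(θ, z_i) + λ‖θ‖². Then for any two datasets S, S' ∈ Z^n that differ in exactly one coordinate, ‖θ̂_S − θ̂_{S'}‖ ≤ L/(λ n). -/
open Real

lemma sc_gap {d : ℕ} (f : (Fin d → ℝ) → ℝ) (hf : ConvexOn ℝ Set.univ f)
    (lam : ℝ) (hlam : 0 < lam) (x y : Fin d → ℝ)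
    (hx : ∀ θ, f x + lam * ∑ j, (x j)^2 ≤ f θ + lam * ∑ j, (θ j)^2) :
    lam * ∑ j, (y j - x j)^2
      ≤ (f y + lam * ∑ j, (y j)^2) - (f x + lam * ∑ j, (x j)^2) := by
  set D : ℝ := ∑ j, (y j - x j)^2 with hDdef
  have hD : 0 ≤ D := Finset.sum_nonneg fun j _ => sq_nonneg _
  have h1 : ∀ t : ℝ, 0 < t → t ≤ 1 →
      lam * (1 - t) * D ≤ (f y + lam * ∑ j, (y j)^2) - (f x + lam * ∑ j, (x j)^2) := by
    intro t ht ht1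
    have ht0 : 0 ≤ 1 - t := by linarith
    have hab : (1 - t) + t = 1 := by ring
    have hc := hf.2 (Set.mem_univ x) (Set.mem_univ y) ht0 ht.le hab
    simp only [smul_eq_mul] at hc
    have hq : ∑ j, (((1-t) • x + t • y) j)^2
        = (1-t) * ∑ j, (x j)^2 + t * ∑ j, (y j)^2 - t*(1-t) * D := by
      rw [hDdef, Finset.mul_sum, Finset.mul_sum, Finset.mul_sum,
        ← Finset.sum_add_distrib, ← Finset.sum_sub_distrib]
      apply Finset.sum_congr rfl
      intro j _
      simp only [Pi.add_apply, Pi.smul_apply, smul_eq_mul]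
      ring
    have hm := hx ((1-t) • x + t • y)
    rw [hq] at hm
    have key : t * (lam * (1 - t) * D)
        ≤ t * ((f y + lam * ∑ j, (y j)^2) - (f x + lam * ∑ j, (x j)^2)) := by
      nlinarith [hm, hc]
    exact le_of_mul_le_mul_left (by linarith [key]) ht
  by_cases hD0 : D = 0
  · have := h1 1 one_pos le_rfl
    simpa [hD0] using this
  · have hDpos : 0 < D := lt_of_le_of_ne hD (Ne.symm hD0)
    refine le_of_forall_pos_le_add ?_
    intro ε hε
    set t : ℝ := min 1 (ε / (lam * D)) with htdef
    have htpos : 0 < t := lt_min one_pos (div_pos hε (mul_pos hlam hDpos))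
    have ht1 : t ≤ 1 := min_le_left _ _
    have h2 := h1 t htpos ht1
    have h3 : lam * t * D ≤ ε := by
      have : t ≤ ε / (lam * D) := min_le_right _ _
      calc lam * t * D = t * (lam * D) := by ring
        _ ≤ (ε / (lam * D)) * (lam * D) := by
            apply mul_le_mul_of_nonneg_right this (mul_pos hlam hDpos).le
        _ = ε := by field_simp
    nlinarith [h2, h3]

/-- **Uniform stability of regularized empirical risk minimization (Lemma 12).**
If `ℓ` is convex and `L`-Lipschitz in its first argument and `θ̂_S`, `θ̂_{S'}` minimize
`F_S(θ) = (1/n) ∑ᵢ ℓ(θ, zᵢ) + λ‖θ‖²` for datasets `S, S'` differing in exactly one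
coordinate, then `‖θ̂_S - θ̂_{S'}‖ ≤ L/(λ n)`. -/
theorem rerm_uniform_stability
    {Z : Type*} {d n : ℕ} (hn : 1 ≤ n)
    (ℓ : (Fin d → ℝ) → Z → ℝ) (hℓ0 : ∀ θ z, 0 ≤ ℓ θ z)
    (L lam : ℝ) (hL : 0 ≤ L) (hlam : 0 < lam)
    (hconv : ∀ z, ConvexOn ℝ Set.univ fun θ => ℓ θ z)
    (hlip : ∀ z θ θ', |ℓ θ z - ℓ θ' z| ≤ L * Real.sqrt (∑ i, (θ i - θ' i) ^ 2))
    (S S' : Fin n → Z)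
    (hSS' : ∃ i₀, S i₀ ≠ S' i₀ ∧ ∀ j, j ≠ i₀ → S j = S' j)
    (θS θS' : Fin d → ℝ)
    (hθS : ∀ θ, (1 / (n : ℝ)) * ∑ i, ℓ θS (S i) + lam * ∑ j, (θS j) ^ 2
      ≤ (1 / (n : ℝ)) * ∑ i, ℓ θ (S i) + lam * ∑ j, (θ j) ^ 2)
    (hθS' : ∀ θ, (1 / (n : ℝ)) * ∑ i, ℓ θS' (S' i) + lam * ∑ j, (θS' j) ^ 2
      ≤ (1 / (n : ℝ)) * ∑ i, ℓ θ (S' i) + lam * ∑ j, (θ j) ^ 2) :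
    Real.sqrt (∑ j, (θS j - θS' j) ^ 2) ≤ L / (lam * n) := by
  have hnpos : (0:ℝ) < n := by exact_mod_cast hn
  have hninv : 0 ≤ (1/(n:ℝ)) := by positivity
  -- convexity of empirical risks
  have hfS : ∀ (T : Fin n → Z),
      ConvexOn ℝ Set.univ (fun θ => (1/(n:ℝ)) * ∑ i, ℓ θ (T i)) := by
    intro T
    refine ⟨convex_univ, fun x _ y _ a b ha hb hab => ?_⟩
    simp only [smul_eq_mul]
    have h1 : ∑ i, ℓ (a • x + b • y) (T i) ≤ ∑ i, (a * ℓ x (T i) + b * ℓ y (T i)) := by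
      apply Finset.sum_le_sum
      intro i _
      have := (hconv (T i)).2 (Set.mem_univ x) (Set.mem_univ y) ha hb hab
      simpa using this
    calc (1/(n:ℝ)) * ∑ i, ℓ (a • x + b • y) (T i)
        ≤ (1/(n:ℝ)) * ∑ i, (a * ℓ x (T i) + b * ℓ y (T i)) :=
          mul_le_mul_of_nonneg_left h1 hninv
      _ = a * ((1/(n:ℝ)) * ∑ i, ℓ x (T i)) + b * ((1/(n:ℝ)) * ∑ i, ℓ y (T i)) := by
          rw [Finset.sum_add_distrib, ← Finset.mul_sum, ← Finset.mul_sum]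
          ring
  set D : ℝ := ∑ j, (θS j - θS' j)^2 with hDdef
  have hD : 0 ≤ D := Finset.sum_nonneg fun j _ => sq_nonneg _
  have hDsym : ∑ j, (θS' j - θS j)^2 = D := by
    rw [hDdef]; apply Finset.sum_congr rfl; intro j _; ring
  have g1 := sc_gap _ (hfS S) lam hlam θS θS' (fun θ => hθS θ)
  have g2 := sc_gap _ (hfS S') lam hlam θS' θS (fun θ => hθS' θ)
  rw [hDsym] at g1
  -- the difference of losses at the differing coordinate
  obtain ⟨i₀, hne, heq⟩ := hSS'
  have hsum : (∑ i, ℓ θS' (S i) - ∑ i, ℓ θS (S i))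
      + (∑ i, ℓ θS (S' i) - ∑ i, ℓ θS' (S' i))
      = (ℓ θS' (S i₀) - ℓ θS (S i₀)) + (ℓ θS (S' i₀) - ℓ θS' (S' i₀)) := by
    have : (∑ i, ℓ θS' (S i) - ∑ i, ℓ θS (S i))
        + (∑ i, ℓ θS (S' i) - ∑ i, ℓ θS' (S' i))
        = ∑ i, ((ℓ θS' (S i) - ℓ θS (S i)) + (ℓ θS (S' i) - ℓ θS' (S' i))) := by
      rw [Finset.sum_add_distrib, Finset.sum_sub_distrib, Finset.sum_sub_distrib]
    rw [this]
    rw [Finset.sum_eq_single i₀]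
    · intro b _ hb
      rw [heq b hb]; ring
    · intro h; exact absurd (Finset.mem_univ i₀) h
  have hlip1 := hlip (S i₀) θS' θS
  have hlip2 := hlip (S' i₀) θS θS'
  rw [hDsym] at hlip1
  have habs1 : ℓ θS' (S i₀) - ℓ θS (S i₀) ≤ L * Real.sqrt D :=
    le_trans (le_abs_self _) hlip1
  have habs2 : ℓ θS (S' i₀) - ℓ θS' (S' i₀) ≤ L * Real.sqrt D :=
    le_trans (le_abs_self _) hlip2
  -- combine: 2 lam D ≤ (2 L / n) √D
  have hcomb : 2 * lam * D ≤ (1/(n:ℝ)) * (2 * L * Real.sqrt D) := by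
    have := add_le_add g1 g2
    have hsum' : (1/(n:ℝ)) * ∑ i, ℓ θS' (S i) - (1/(n:ℝ)) * ∑ i, ℓ θS (S i)
        + ((1/(n:ℝ)) * ∑ i, ℓ θS (S' i) - (1/(n:ℝ)) * ∑ i, ℓ θS' (S' i))
        ≤ (1/(n:ℝ)) * (2 * L * Real.sqrt D) := by
      have : (1/(n:ℝ)) * ∑ i, ℓ θS' (S i) - (1/(n:ℝ)) * ∑ i, ℓ θS (S i)
          + ((1/(n:ℝ)) * ∑ i, ℓ θS (S' i) - (1/(n:ℝ)) * ∑ i, ℓ θS' (S' i))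
          = (1/(n:ℝ)) * ((∑ i, ℓ θS' (S i) - ∑ i, ℓ θS (S i))
            + (∑ i, ℓ θS (S' i) - ∑ i, ℓ θS' (S' i))) := by ring
      rw [this, hsum]
      apply mul_le_mul_of_nonneg_left _ hninv
      linarith [habs1, habs2]
    linarith [this, hsum']
  -- finish
  set r : ℝ := Real.sqrt D with hrdef
  have hr : r^2 = D := Real.sq_sqrt hD
  have hr0 : 0 ≤ r := Real.sqrt_nonneg _
  show r ≤ L / (lam * n)
  rcases eq_or_lt_of_le hr0 with h | hrpos
  · rw [← h]; positivity
  · have h2 : lam * r^2 ≤ (L / n) * r := by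
      rw [hr]
      have : (1/(n:ℝ)) * (2 * L * r) = 2 * ((L/n) * r) := by ring
      rw [this] at hcomb
      linarith
    have h3 : lam * r ≤ L / n := by
      have := le_of_mul_le_mul_right (by nlinarith : lam * r * r ≤ (L/n) * r) hrpos
      linarith
    rw [le_div_iff₀ (by positivity : 0 < lam * n)]
    calc r * (lam * n) = (lam * r) * n := by ring
      _ ≤ (L / n) * n := by apply mul_le_mul_of_nonneg_right h3 hnpos.le
      _ = L := by field_simp
end

section
/- Suppose sup_{x ∈ X, a ∈ A} ‖φ(x,a)‖ ≤ B. Then for all θ0, θ ∈ ℝ^d, sup_{x ∈ X} KL( π^sm_{θ0}(·|x) ‖ π^sm_θ(·|x) ) ≤ 2 B ‖θ − θ0‖. -/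
open Real

/-- The softmax policy with parameters `θ` and feature map `φ`. -/
noncomputable def softmax {X : Type*} {k d : ℕ} (φ : X → Fin k → Fin d → ℝ)
    (θ : Fin d → ℝ) (x : X) (a : Fin k) : ℝ :=
  Real.exp (∑ i, θ i * φ x a i) / ∑ a' : Fin k, Real.exp (∑ i, θ i * φ x a' i)

/-- **TRPO-style KL bound for softmax policies (eq. 17).** If `‖φ(x,a)‖ ≤ B` for all `x, a`,
then for every context `x`,
`KL(π^sm_{θ0}(·|x) ‖ π^sm_θ(·|x)) ≤ 2 * B * ‖θ - θ0‖`. -/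
theorem softmax_kl_le
    {X : Type*} {k d : ℕ} (hk : 0 < k)
    (φ : X → Fin k → Fin d → ℝ) (B : ℝ)
    (hB : ∀ x a, Real.sqrt (∑ i, (φ x a i) ^ 2) ≤ B)
    (θ0 θ : Fin d → ℝ) (x : X) :
    ∑ a, softmax φ θ0 x a * Real.log (softmax φ θ0 x a / softmax φ θ x a)
      ≤ 2 * B * Real.sqrt (∑ i, (θ i - θ0 i) ^ 2) := by
  haveI : NeZero k := ⟨hk.ne'⟩
  set f : (Fin d → ℝ) → Fin k → ℝ := fun η a => ∑ i, η i * φ x a i with hf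
  set Z : (Fin d → ℝ) → ℝ := fun η => ∑ a : Fin k, Real.exp (f η a) with hZ
  have hZpos : ∀ η, 0 < Z η := fun η =>
    Finset.sum_pos (fun a _ => Real.exp_pos _) Finset.univ_nonempty
  set c : ℝ := Real.sqrt (∑ i, (θ i - θ0 i) ^ 2) with hc
  have hcnn : 0 ≤ c := Real.sqrt_nonneg _
  have hBnn : 0 ≤ B := le_trans (Real.sqrt_nonneg _) (hB x ⟨0, hk⟩)
  -- Cauchy-Schwarz bound
  have cs : ∀ a : Fin k, |f θ a - f θ0 a| ≤ B * c := by
    intro a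
    have h1 : f θ a - f θ0 a = ∑ i, (θ i - θ0 i) * φ x a i := by
      simp [hf, ← Finset.sum_sub_distrib, sub_mul]
    have h2 : f θ0 a - f θ a = ∑ i, (θ i - θ0 i) * (-φ x a i) := by
      rw [show (∑ i, (θ i - θ0 i) * (-φ x a i)) = -∑ i, (θ i - θ0 i) * φ x a i by
        simp [mul_neg]]
      rw [← h1]; ring
    rw [abs_sub_le_iff]
    constructor
    · rw [h1]
      calc ∑ i, (θ i - θ0 i) * φ x a i
          ≤ Real.sqrt (∑ i, (θ i - θ0 i) ^ 2) * Real.sqrt (∑ i, (φ x a i) ^ 2) :=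
            Real.sum_mul_le_sqrt_mul_sqrt _ _ _
        _ ≤ c * B := by
            apply mul_le_mul_of_nonneg_left (hB x a) hcnn
        _ = B * c := mul_comm _ _
    · rw [h2]
      calc ∑ i, (θ i - θ0 i) * (-φ x a i)
          ≤ Real.sqrt (∑ i, (θ i - θ0 i) ^ 2) * Real.sqrt (∑ i, (-φ x a i) ^ 2) :=
            Real.sum_mul_le_sqrt_mul_sqrt _ _ _
        _ ≤ c * B := by
            apply mul_le_mul_of_nonneg_left _ hcnn
            simpa using hB x a
        _ = B * c := mul_comm _ _
  -- log Z θ - log Z θ0 ≤ B * c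
  have hZle : Real.log (Z θ) - Real.log (Z θ0) ≤ B * c := by
    have hZb : Z θ ≤ Real.exp (B * c) * Z θ0 := by
      rw [hZ, Finset.mul_sum]
      apply Finset.sum_le_sum
      intro a _
      rw [← Real.exp_add]
      apply Real.exp_le_exp.2
      have := (abs_le.1 (cs a)).2
      linarith
    calc Real.log (Z θ) - Real.log (Z θ0)
        ≤ Real.log (Real.exp (B * c) * Z θ0) - Real.log (Z θ0) := by
          have := Real.log_le_log (hZpos θ) hZb
          linarith
      _ = B * c := by
          rw [Real.log_mul (Real.exp_pos _).ne' (hZpos θ0).ne', Real.log_exp]; ring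
  -- rewrite each summand
  have hsm : ∀ η a, softmax φ η x a = Real.exp (f η a) / Z η := fun η a => rfl
  have hlog : ∀ a : Fin k,
      Real.log (softmax φ θ0 x a / softmax φ θ x a)
        = (f θ0 a - f θ a) + (Real.log (Z θ) - Real.log (Z θ0)) := by
    intro a
    rw [hsm, hsm, Real.log_div (by positivity) (by positivity),
      Real.log_div (Real.exp_ne_zero _) (hZpos θ0).ne',
      Real.log_div (Real.exp_ne_zero _) (hZpos θ).ne',
      Real.log_exp, Real.log_exp]
    ring
  have hsum1 : ∑ a, softmax φ θ0 x a = 1 := by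
    simp only [hsm, ← Finset.sum_div]
    exact div_self (hZpos θ0).ne'
  have hnn : ∀ a : Fin k, 0 ≤ softmax φ θ0 x a := by
    intro a; rw [hsm]; positivity
  calc ∑ a, softmax φ θ0 x a * Real.log (softmax φ θ0 x a / softmax φ θ x a)
      = ∑ a, softmax φ θ0 x a * ((f θ0 a - f θ a) + (Real.log (Z θ) - Real.log (Z θ0))) := by
        exact Finset.sum_congr rfl fun a _ => by rw [hlog a]
    _ ≤ ∑ a, softmax φ θ0 x a * (B * c + B * c) := by
        apply Finset.sum_le_sum
        intro a _
        apply mul_le_mul_of_nonneg_left _ (hnn a)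
        have := (abs_le.1 (cs a)).1
        linarith
    _ = (B * c + B * c) * ∑ a, softmax φ θ0 x a := by
        rw [Finset.mul_sum]; exact Finset.sum_congr rfl fun a _ => mul_comm _ _
    _ = 2 * B * c := by rw [hsum1]; ring
end

section
/- Suppose sup_{x ∈ X, a ∈ A} ‖φ(x,a)‖ ≤ B. Then for any logged dataset S, any τ ∈ (0,1), any w ∈ ℝ^d and σ > 0: the truncated IPS estimate of the mixed logit policy is upper-bounded by the mean-parameter estimator, i.e., 1 − (1/n) Σ_{i=1}^n r_i π_{w,σ}(a_i|x_i)/max{p_i, τ} ≤ 1 − (exp(−(1/2) σ B²)/n) Σ_{i=1}^n r_i π^sm_w(a_i|x_i)/max{p_i, τ}. -/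
open MeasureTheory Real

/-- The Gaussian distribution `N(w, σ I_d)` on `ℝ^d`. -/
noncomputable def gaussPi (d : ℕ) (w : Fin d → ℝ) (σ : ℝ) : Measure (Fin d → ℝ) :=
  Measure.pi fun i => ProbabilityTheory.gaussianReal (w i) σ.toNNReal

open ProbabilityTheory
open scoped NNReal ENNReal

set_option linter.unusedVariables false
set_option linter.unusedSectionVars false
set_option linter.unnecessarySimpa false


lemma gauss_meas_nn (m : ℝ) (v : ℝ≥0) :
    Measurable fun x => (gaussianPDFReal m v x).toNNReal :=
  (measurable_gaussianPDFReal m v).real_toNNReal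

lemma gauss_smul_eq (m : ℝ) (v : ℝ≥0) (g : ℝ → ℝ) :
    (fun x => (gaussianPDFReal m v x).toNNReal • g x) = fun x => gaussianPDFReal m v x * g x := by
  funext x
  simp [NNReal.smul_def, Real.coe_toNNReal _ (gaussianPDFReal_nonneg m v x)]

lemma gauss_density_eq (m : ℝ) (v : ℝ≥0) :
    (gaussianPDF m v) = fun x => ((gaussianPDFReal m v x).toNNReal : ℝ≥0∞) := by
  funext x; simp [gaussianPDF, ENNReal.ofReal]

lemma gauss_integral_eq (m : ℝ) {v : ℝ≥0} (hv : v ≠ 0) (g : ℝ → ℝ) :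
    ∫ x, g x ∂gaussianReal m v = ∫ x, gaussianPDFReal m v x * g x := by
  rw [gaussianReal_of_var_ne_zero m hv, gauss_density_eq,
    integral_withDensity_eq_integral_smul (gauss_meas_nn m v), gauss_smul_eq]

lemma gauss_integrable_iff (m : ℝ) {v : ℝ≥0} (hv : v ≠ 0) {g : ℝ → ℝ} (hg : Measurable g) :
    Integrable g (gaussianReal m v) ↔ Integrable (fun x => gaussianPDFReal m v x * g x) := by
  rw [gaussianReal_of_var_ne_zero m hv, gauss_density_eq, ← gauss_smul_eq,
    integrable_withDensity_iff_integrable_smul (gauss_meas_nn m v)]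

lemma gauss_pdf_mul_exp (m t : ℝ) {v : ℝ≥0} (hv : v ≠ 0) (x : ℝ) :
    gaussianPDFReal m v x * Real.exp (t * x)
      = Real.exp (t * m + v * t ^ 2 / 2) * gaussianPDFReal (m + v * t) v x := by
  have hv' : (v : ℝ) ≠ 0 := by exact_mod_cast hv
  simp only [gaussianPDFReal]
  rw [mul_assoc, ← Real.exp_add]
  have key : -(x - m) ^ 2 / (2 * (v:ℝ)) + t * x
      = (t * m + v * t ^ 2 / 2) + -(x - (m + v * t)) ^ 2 / (2 * (v:ℝ)) := by
    field_simp
    ring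
  rw [key, Real.exp_add]
  ring

lemma gauss_exp_integrable (m t : ℝ) {v : ℝ≥0} (hv : v ≠ 0) :
    Integrable (fun x => Real.exp (t * x)) (gaussianReal m v) := by
  rw [gauss_integrable_iff m hv (by fun_prop)]
  have : (fun x => gaussianPDFReal m v x * Real.exp (t * x))
      = fun x => Real.exp (t * m + v * t ^ 2 / 2) * gaussianPDFReal (m + v * t) v x := by
    funext x; exact gauss_pdf_mul_exp m t hv x
  rw [this]
  exact (integrable_gaussianPDFReal _ _).const_mul _

lemma gauss_exp_integral (m t : ℝ) {v : ℝ≥0} (hv : v ≠ 0) :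
    ∫ x, Real.exp (t * x) ∂gaussianReal m v = Real.exp (t * m + v * t ^ 2 / 2) := by
  rw [gauss_integral_eq m hv]
  have : (fun x => gaussianPDFReal m v x * Real.exp (t * x))
      = fun x => Real.exp (t * m + v * t ^ 2 / 2) * gaussianPDFReal (m + v * t) v x := by
    funext x; exact gauss_pdf_mul_exp m t hv x
  rw [this, integral_const_mul, integral_gaussianPDFReal_eq_one _ hv, mul_one]

lemma abs_le_exp_add_exp (y : ℝ) : |y| ≤ Real.exp y + Real.exp (-y) := by
  rcases abs_cases y with ⟨h, _⟩ | ⟨h, _⟩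
  · rw [h]
    nlinarith [Real.add_one_le_exp y, Real.exp_nonneg (-y)]
  · rw [h]
    nlinarith [Real.add_one_le_exp (-y), Real.exp_nonneg y]

lemma gauss_id_integrable (m : ℝ) {v : ℝ≥0} (hv : v ≠ 0) :
    Integrable (fun x : ℝ => x) (gaussianReal m v) := by
  refine Integrable.mono' ((gauss_exp_integrable m 1 hv).add (gauss_exp_integrable m (-1) hv))
    measurable_id.aestronglyMeasurable (ae_of_all _ fun x => ?_)
  simpa using abs_le_exp_add_exp x

lemma gauss_pdf_even (v : ℝ≥0) (x : ℝ) : gaussianPDFReal 0 v (-x) = gaussianPDFReal 0 v x := by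
  simp only [gaussianPDFReal]
  ring_nf

lemma gauss_id_integral_zero {v : ℝ≥0} (hv : v ≠ 0) :
    ∫ x, x ∂gaussianReal 0 v = 0 := by
  rw [gauss_integral_eq 0 hv]
  have h : ∫ x, gaussianPDFReal 0 v x * x = ∫ x, gaussianPDFReal 0 v (-x) * (-x) := by
    exact (integral_neg_eq_self (fun x => gaussianPDFReal 0 v x * x) volume).symm
  have h2 : ∫ x, gaussianPDFReal 0 v (-x) * (-x) = - ∫ x, gaussianPDFReal 0 v x * x := by
    rw [← integral_neg]
    congr 1; funext x; rw [gauss_pdf_even]; ring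
  linarith [h, h2]

lemma gauss_id_integral (m : ℝ) {v : ℝ≥0} (hv : v ≠ 0) :
    ∫ x, x ∂gaussianReal m v = m := by
  rw [gauss_integral_eq m hv]
  have ht : ∫ x, gaussianPDFReal m v x * x = ∫ x, gaussianPDFReal m v (x + m) * (x + m) := by
    rw [integral_add_right_eq_self (fun x => gaussianPDFReal m v x * x) m]
  rw [ht]
  have h3 : ∀ x : ℝ, gaussianPDFReal m v (x + m) = gaussianPDFReal 0 v x := by
    intro x; rw [gaussianPDFReal_add]; simp
  have h4 : (fun x => gaussianPDFReal m v (x + m) * (x + m))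
      = fun x => gaussianPDFReal 0 v x * x + m * gaussianPDFReal 0 v x := by
    funext x; rw [h3]; ring
  rw [h4, integral_add ?hi ((integrable_gaussianPDFReal 0 v).const_mul m)]
  · have h5 : ∫ x, gaussianPDFReal 0 v x * x = 0 := by
      have := gauss_id_integral_zero hv
      rwa [gauss_integral_eq 0 hv] at this
    rw [h5, integral_const_mul, integral_gaussianPDFReal_eq_one 0 hv, mul_one, zero_add]
  · exact ((gauss_integrable_iff 0 hv measurable_id).mp (gauss_id_integrable 0 hv))

section Pi
variable {d : ℕ} (w : Fin d → ℝ) (v : ℝ≥0)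

lemma pi_prod_integral (f : Fin d → ℝ → ℝ) (hf : ∀ i, Integrable (f i) (gaussianReal (w i) v)) :
    (Integrable (fun θ : Fin d → ℝ => ∏ i, f i (θ i)) (Measure.pi fun i => gaussianReal (w i) v)) ∧
    ∫ θ : Fin d → ℝ, ∏ i, f i (θ i) ∂(Measure.pi fun i => gaussianReal (w i) v)
      = ∏ i, ∫ x, f i x ∂gaussianReal (w i) v := by
  letI inst : ∀ _i : Fin d, MeasureSpace ℝ := fun i => ⟨gaussianReal (w i) v⟩
  have sf : ∀ i : Fin d, SigmaFinite (@volume ℝ (inst i)) := fun i =>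
    (inferInstance : SigmaFinite (gaussianReal (w i) v))
  constructor
  · exact MeasureTheory.Integrable.fin_nat_prod (μ := fun i => gaussianReal (w i) v) hf
  · exact MeasureTheory.integral_fin_nat_prod_eq_prod (μ := fun i => gaussianReal (w i) v) f
end Pi

section Pi
variable {d : ℕ} (w : Fin d → ℝ) {v : ℝ≥0} (hv : v ≠ 0)

lemma exp_dot_eq (u : Fin d → ℝ) (θ : Fin d → ℝ) :
    Real.exp (∑ i, θ i * u i) = ∏ i, Real.exp (u i * (θ i)) := by
  rw [← Real.exp_sum]
  congr 1
  exact Finset.sum_congr rfl fun i _ => mul_comm _ _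

include hv
local notation "μpi" => Measure.pi fun i => gaussianReal (w i) v

lemma mgf_pi_integrable (u : Fin d → ℝ) :
    Integrable (fun θ : Fin d → ℝ => Real.exp (∑ i, θ i * u i)) μpi := by
  have h := (pi_prod_integral w v (fun i x => Real.exp (u i * x))
    (fun i => gauss_exp_integrable (w i) (u i) hv)).1
  simpa only [← exp_dot_eq] using h

lemma mgf_pi_integral (u : Fin d → ℝ) :
    ∫ θ, Real.exp (∑ i, θ i * u i) ∂μpi
      = Real.exp (∑ i, (u i * w i + v * (u i) ^ 2 / 2)) := by
  have h := (pi_prod_integral w v (fun i x => Real.exp (u i * x))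
    (fun i => gauss_exp_integrable (w i) (u i) hv)).2
  simp only [← exp_dot_eq] at h
  rw [h, Real.exp_sum]
  exact Finset.prod_congr rfl fun i _ => gauss_exp_integral (w i) (u i) hv

lemma coord_pi (j : Fin d) :
    Integrable (fun θ : Fin d → ℝ => θ j) μpi ∧ ∫ θ, θ j ∂μpi = w j := by
  have hfe : ∀ θ : Fin d → ℝ,
      (∏ i, (if i = j then θ i else 1)) = θ j := by
    intro θ
    rw [Finset.prod_eq_single j (fun i _ hij => if_neg hij) (by simp)]
    simp
  have h := pi_prod_integral w v (fun i x => if i = j then x else 1)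
    (fun i => by
      by_cases hij : i = j
      · simpa [hij] using gauss_id_integrable (w i) hv
      · simpa [hij] using (integrable_const (1 : ℝ) (μ := gaussianReal (w i) v)))
  simp only [hfe] at h
  refine ⟨h.1, ?_⟩
  rw [h.2, Finset.prod_eq_single j (fun i _ hij => by simp [hij]) (by simp)]
  simpa using gauss_id_integral (w j) hv

lemma dot_pi_integrable (u : Fin d → ℝ) :
    Integrable (fun θ : Fin d → ℝ => ∑ i, θ i * u i) μpi := by
  apply integrable_finset_sum
  intro i _
  exact ((coord_pi w hv i).1).mul_const (u i)

lemma dot_pi_integral (u : Fin d → ℝ) :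
    ∫ θ, ∑ i, θ i * u i ∂μpi = ∑ i, w i * u i := by
  rw [integral_finset_sum _ (fun i _ => ((coord_pi w hv i).1).mul_const (u i))]
  refine Finset.sum_congr rfl fun i _ => ?_
  rw [integral_mul_const, (coord_pi w hv i).2]
end Pi

lemma softmax_key {X : Type*} {k d : ℕ} (φ : X → Fin k → Fin d → ℝ) (B : ℝ)
    (hB : ∀ x a, Real.sqrt (∑ i, (φ x a i) ^ 2) ≤ B) (x : X) (a : Fin k)
    (w : Fin d → ℝ) {v : ℝ≥0} (hv : v ≠ 0) :
    Real.exp (-(1 / 2) * v * B ^ 2) * softmax φ w x a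
      ≤ ∫ θ, softmax φ θ x a ∂(Measure.pi fun i => gaussianReal (w i) v) := by
  set μ := (Measure.pi fun i => gaussianReal (w i) v) with hμ
  haveI : IsProbabilityMeasure μ := by
    rw [hμ]; infer_instance
  set dot : (Fin d → ℝ) → Fin k → ℝ := fun θ a' => ∑ i, θ i * φ x a' i with hdot
  set S : (Fin d → ℝ) → ℝ := fun θ => ∑ a', Real.exp (dot θ a') with hS
  have hSpos : ∀ θ, 0 < S θ :=
    fun θ => Finset.sum_pos (fun a' _ => Real.exp_pos _) ⟨a, Finset.mem_univ a⟩
  have hsm : ∀ θ, softmax φ θ x a = Real.exp (dot θ a - Real.log (S θ)) := by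
    intro θ
    rw [Real.exp_sub, Real.exp_log (hSpos θ)]
    rfl
  -- continuity
  have hdc : ∀ a', Continuous fun θ : Fin d → ℝ => dot θ a' := by
    intro a'
    exact continuous_finset_sum _ fun i _ => (continuous_apply i).mul continuous_const
  have hSc : Continuous S := continuous_finset_sum _ fun a' _ => (hdc a').rexp
  have hlogSc : Continuous fun θ => Real.log (S θ) :=
    hSc.log fun θ => (hSpos θ).ne'
  -- integrability of S
  have hSint : Integrable S μ :=
    integrable_finset_sum _ fun a' _ => mgf_pi_integrable w hv (φ x a')
  -- bound on feature norms
  have hB2 : ∀ a', ∑ i, (φ x a' i) ^ 2 ≤ B ^ 2 := by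
    intro a'
    have h0 : (0:ℝ) ≤ ∑ i, (φ x a' i) ^ 2 := Finset.sum_nonneg fun i _ => sq_nonneg _
    calc ∑ i, (φ x a' i) ^ 2 = (Real.sqrt (∑ i, (φ x a' i) ^ 2)) ^ 2 := (Real.sq_sqrt h0).symm
    _ ≤ B ^ 2 := pow_le_pow_left₀ (Real.sqrt_nonneg _) (hB x a') 2
  -- integral of S
  set c : ℝ := ∫ θ, S θ ∂μ with hc
  have hcval : c = ∑ a', Real.exp (∑ i, (φ x a' i * w i + v * (φ x a' i) ^ 2 / 2)) := by
    rw [hc, hS]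
    rw [integral_finset_sum _ fun a' _ => mgf_pi_integrable w hv (φ x a')]
    exact Finset.sum_congr rfl fun a' _ => mgf_pi_integral w hv (φ x a')
  have hcle : c ≤ Real.exp ((v : ℝ) * B ^ 2 / 2) * S w := by
    rw [hcval, hS, Finset.mul_sum]
    refine Finset.sum_le_sum fun a' _ => ?_
    rw [← Real.exp_add]
    apply Real.exp_le_exp.2
    have : ∑ i, (φ x a' i * w i + (v:ℝ) * (φ x a' i) ^ 2 / 2)
        = (∑ i, w i * φ x a' i) + (v:ℝ) / 2 * ∑ i, (φ x a' i) ^ 2 := by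
      rw [Finset.sum_add_distrib, Finset.mul_sum]
      congr 1
      · exact Finset.sum_congr rfl fun i _ => mul_comm _ _
      · exact Finset.sum_congr rfl fun i _ => by ring
    rw [this, hdot]
    have := hB2 a'
    have hv0 : (0:ℝ) ≤ v := v.2
    nlinarith
  have hcpos : 0 < c := by
    rw [hcval]
    exact Finset.sum_pos (fun a' _ => Real.exp_pos _) ⟨a, Finset.mem_univ a⟩
  -- integrability of log S
  have hdint : Integrable (fun θ => dot θ a) μ := dot_pi_integrable w hv (φ x a)
  have hexpd : Integrable (fun θ => Real.exp (dot θ a)) μ := mgf_pi_integrable w hv (φ x a)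
  have hexpnd : Integrable (fun θ => Real.exp (-dot θ a)) μ := by
    have h := mgf_pi_integrable w hv (fun i => -φ x a i)
    simpa [hdot, ← Finset.sum_neg_distrib, mul_neg] using h
  have hlogSint : Integrable (fun θ => Real.log (S θ)) μ := by
    refine Integrable.mono' (hSint.add (hexpd.add hexpnd))
      hlogSc.aestronglyMeasurable (ae_of_all _ fun θ => ?_)
    rw [Real.norm_eq_abs, abs_le]
    simp only [Pi.add_apply]
    constructor
    · have h1 : dot θ a ≤ Real.log (S θ) := by
        rw [← Real.log_exp (dot θ a)]
        exact Real.log_le_log (Real.exp_pos _)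
          (Finset.single_le_sum (fun a' _ => (Real.exp_pos (dot θ a')).le) (Finset.mem_univ a))
      have h2 : -(Real.exp (dot θ a) + Real.exp (-dot θ a)) ≤ dot θ a := by
        have := abs_le_exp_add_exp (dot θ a)
        have := neg_abs_le (dot θ a)
        linarith
      have h3 : 0 < S θ := hSpos θ
      linarith
    · have h4 : Real.log (S θ) ≤ S θ - 1 := Real.log_le_sub_one_of_pos (hSpos θ)
      have h5 : 0 < Real.exp (dot θ a) + Real.exp (-dot θ a) := by positivity
      linarith
  -- ∫ log S ≤ log c
  have hlogSle : ∫ θ, Real.log (S θ) ∂μ ≤ Real.log c := by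
    have hmono : ∫ θ, Real.log (S θ) ∂μ ≤ ∫ θ, (Real.log c + (S θ / c - 1)) ∂μ := by
      refine integral_mono hlogSint ?_ fun θ => ?_
      · exact (integrable_const (Real.log c)).add ((hSint.div_const c).sub (integrable_const 1))
      · have h6 : Real.log (S θ / c) ≤ S θ / c - 1 :=
          Real.log_le_sub_one_of_pos (div_pos (hSpos θ) hcpos)
        rw [Real.log_div (hSpos θ).ne' hcpos.ne'] at h6
        simp only
        linarith
    have heq : ∫ θ, (Real.log c + (S θ / c - 1)) ∂μ = Real.log c := by
      have hfe : (fun θ => Real.log c + (S θ / c - 1)) = fun θ => (Real.log c - 1) + S θ * c⁻¹ := by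
        funext θ; rw [div_eq_mul_inv]; ring
      rw [hfe, integral_add (integrable_const _) (hSint.mul_const c⁻¹), integral_mul_const,
        integral_const, ← hc]
      simp [mul_inv_cancel₀ hcpos.ne']
    linarith
  -- the Y function and its integral
  have hYint : Integrable (fun θ => dot θ a - Real.log (S θ)) μ := hdint.sub hlogSint
  set cY : ℝ := ∫ θ, (dot θ a - Real.log (S θ)) ∂μ with hcY
  have hYval : cY = (∑ i, w i * φ x a i) - ∫ θ, Real.log (S θ) ∂μ := by
    rw [hcY, integral_sub hdint hlogSint, dot_pi_integral w hv]
  have hYlb : Real.log (softmax φ w x a) - (v : ℝ) * B ^ 2 / 2 ≤ cY := by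
    have h7 : Real.log c ≤ (v : ℝ) * B ^ 2 / 2 + Real.log (S w) := by
      calc Real.log c ≤ Real.log (Real.exp ((v : ℝ) * B ^ 2 / 2) * S w) :=
        Real.log_le_log hcpos hcle
      _ = (v : ℝ) * B ^ 2 / 2 + Real.log (S w) := by
        rw [Real.log_mul (Real.exp_pos _).ne' (hSpos w).ne', Real.log_exp]
    have h8 : Real.log (softmax φ w x a) = dot w a - Real.log (S w) := by
      rw [hsm w, Real.log_exp]
    rw [h8, hYval, hdot]
    linarith
  -- softmax is integrable (bounded by 1)
  have hsmnonneg : ∀ θ, 0 ≤ softmax φ θ x a := fun θ =>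
    div_nonneg (Real.exp_pos _).le (hSpos θ).le
  have hsmle1 : ∀ θ, softmax φ θ x a ≤ 1 := by
    intro θ
    rw [hsm θ, Real.exp_le_one_iff, sub_nonpos, ← Real.log_exp (dot θ a)]
    exact Real.log_le_log (Real.exp_pos _)
      (Finset.single_le_sum (fun a' _ => (Real.exp_pos (dot θ a')).le) (Finset.mem_univ a))
  have hsmc : Continuous fun θ => softmax φ θ x a := by
    unfold softmax
    exact (hdc a).rexp.div hSc fun θ => (hSpos θ).ne'
  have hsmint : Integrable (fun θ => softmax φ θ x a) μ := by
    refine Integrable.mono' (integrable_const 1) hsmc.aestronglyMeasurable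
      (ae_of_all _ fun θ => ?_)
    rw [Real.norm_eq_abs, abs_of_nonneg (hsmnonneg θ)]
    exact hsmle1 θ
  -- Jensen: exp cY ≤ ∫ softmax
  have hjensen : Real.exp cY ≤ ∫ θ, softmax φ θ x a ∂μ := by
    have hpt : ∀ θ, Real.exp cY * (1 + ((dot θ a - Real.log (S θ)) - cY)) ≤ softmax φ θ x a := by
      intro θ
      rw [hsm θ]
      have h9 : 1 + ((dot θ a - Real.log (S θ)) - cY) ≤ Real.exp ((dot θ a - Real.log (S θ)) - cY) := by
        have := Real.add_one_le_exp ((dot θ a - Real.log (S θ)) - cY)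
        linarith
      calc Real.exp cY * (1 + ((dot θ a - Real.log (S θ)) - cY))
          ≤ Real.exp cY * Real.exp ((dot θ a - Real.log (S θ)) - cY) :=
            mul_le_mul_of_nonneg_left h9 (Real.exp_pos _).le
      _ = Real.exp (dot θ a - Real.log (S θ)) := by rw [← Real.exp_add]; ring_nf
    have hlhs : Integrable (fun θ => Real.exp cY * (1 + ((dot θ a - Real.log (S θ)) - cY))) μ := by
      apply Integrable.const_mul
      exact (integrable_const 1).add (hYint.sub (integrable_const cY))
    have := integral_mono hlhs hsmint hpt
    calc Real.exp cY
        = ∫ θ, Real.exp cY * (1 + ((dot θ a - Real.log (S θ)) - cY)) ∂μ := by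
          have hfe : (fun θ => 1 + ((dot θ a - Real.log (S θ)) - cY))
              = fun θ => (1 - cY) + (dot θ a - Real.log (S θ)) := by
            funext θ; ring
          rw [integral_const_mul, hfe, integral_add (integrable_const _) hYint,
            integral_const, ← hcY]
          simp
    _ ≤ ∫ θ, softmax φ θ x a ∂μ := this
  -- conclude
  have hsmwpos : 0 < softmax φ w x a := by rw [hsm w]; exact Real.exp_pos _
  calc Real.exp (-(1 / 2) * v * B ^ 2) * softmax φ w x a
      = Real.exp (Real.log (softmax φ w x a) - (v : ℝ) * B ^ 2 / 2) := by
        rw [Real.exp_sub, Real.exp_log hsmwpos,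
          show -(1 / 2) * (v:ℝ) * B ^ 2 = -((v:ℝ) * B ^ 2 / 2) by ring, Real.exp_neg]
        ring
  _ ≤ Real.exp cY := Real.exp_le_exp.2 hYlb
  _ ≤ ∫ θ, softmax φ θ x a ∂μ := hjensen

/-- **The truncated IPS estimate of the mixed logit policy is upper-bounded by the
mean-parameter estimator (used in Theorem 6).** -/
theorem mixed_logit_ips_le_mean_param
    {X : Type*} {k d n : ℕ}
    (φ : X → Fin k → Fin d → ℝ) (B : ℝ)
    (hB : ∀ x a, Real.sqrt (∑ i, (φ x a i) ^ 2) ≤ B)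
    (x : Fin n → X) (a : Fin n → Fin k) (p r : Fin n → ℝ)
    (hp : ∀ i, 0 < p i ∧ p i ≤ 1) (hr : ∀ i, 0 ≤ r i ∧ r i ≤ 1)
    (τ : ℝ) (hτ : τ ∈ Set.Ioo (0 : ℝ) 1)
    (w : Fin d → ℝ) (σ : ℝ) (hσ : 0 < σ) :
    1 - (1 / (n : ℝ)) *
        ∑ i, r i * (∫ θ, softmax φ θ (x i) (a i) ∂gaussPi d w σ) / max (p i) τ
      ≤ 1 - (Real.exp (-(1 / 2) * σ * B ^ 2) / (n : ℝ)) *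
        ∑ i, r i * softmax φ w (x i) (a i) / max (p i) τ := by
  have hv : σ.toNNReal ≠ 0 := (Real.toNNReal_pos.mpr hσ).ne'
  have hvσ : ((σ.toNNReal : ℝ)) = σ := Real.coe_toNNReal σ hσ.le
  set e : ℝ := Real.exp (-(1 / 2) * σ * B ^ 2) with he
  apply sub_le_sub_left
  have hterm : ∀ i : Fin n,
      e * (r i * softmax φ w (x i) (a i) / max (p i) τ)
        ≤ r i * (∫ θ, softmax φ θ (x i) (a i) ∂gaussPi d w σ) / max (p i) τ := by
    intro i
    have hkey : e * softmax φ w (x i) (a i)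
        ≤ ∫ θ, softmax φ θ (x i) (a i) ∂gaussPi d w σ := by
      have h := softmax_key φ B hB (x i) (a i) w hv
      rw [hvσ] at h
      exact h
    have hm : 0 < max (p i) τ := lt_max_of_lt_right hτ.1
    have hrn : 0 ≤ r i := (hr i).1
    calc e * (r i * softmax φ w (x i) (a i) / max (p i) τ)
        = r i * (e * softmax φ w (x i) (a i)) / max (p i) τ := by ring
    _ ≤ r i * (∫ θ, softmax φ θ (x i) (a i) ∂gaussPi d w σ) / max (p i) τ := by
        gcongr
  calc e / (n : ℝ) * ∑ i, r i * softmax φ w (x i) (a i) / max (p i) τ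
      = (1 / (n : ℝ)) * ∑ i, e * (r i * softmax φ w (x i) (a i) / max (p i) τ) := by
        rw [Finset.mul_sum, Finset.mul_sum]
        refine Finset.sum_congr rfl fun i _ => ?_
        ring
  _ ≤ (1 / (n : ℝ)) * ∑ i, r i * (∫ θ, softmax φ θ (x i) (a i) ∂gaussPi d w σ) / max (p i) τ := by
        refine mul_le_mul_of_nonneg_left (Finset.sum_le_sum fun i _ => hterm i) ?_
        positivity
end

section
/- Let A be a finite nonempty set, let (s_a)_{a∈A} be real numbers, and let (g_a)_{a∈A} be independent random variables each distributed according to the standard Gumbel distribution. Then almost surely the maximizer of a ↦ s_a + g_a is unique, and for every a* ∈ A, P( s_{a*} + g_{a*} > s_a + g_a for all a ≠ a* ) = exp(s_{a*}) / Σ_{a∈A} exp(s_a). -/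
open MeasureTheory Real

/-- The standard Gumbel distribution `Gumbel(0,1)` on `ℝ`, with density
`t ↦ exp(-t - exp(-t))` with respect to Lebesgue measure. -/
noncomputable def gumbel : Measure ℝ :=
  MeasureTheory.volume.withDensity fun t => ENNReal.ofReal (Real.exp (-t - Real.exp (-t)))

section Auxiliary
open Set

lemma image_exp_neg_univ : (fun t : ℝ => exp (-t)) '' univ = Ioi 0 := by
  rw [image_univ]
  have : (fun t : ℝ => exp (-t)) = exp ∘ Neg.neg := rfl
  rw [this, range_comp, neg_surjective.range_eq, image_univ, Real.range_exp]

lemma image_exp_neg_Iio (r : ℝ) : (fun t : ℝ => exp (-t)) '' (Iio r) = Ioi (exp (-r)) := by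
  ext u
  constructor
  · rintro ⟨t, ht, rfl⟩
    exact exp_lt_exp.2 (neg_lt_neg ht)
  · intro hu
    have hu0 : 0 < u := lt_trans (exp_pos _) hu
    refine ⟨-Real.log u, ?_, by simp [Real.exp_log hu0]⟩
    have : exp (-r) < exp (Real.log u) := by rwa [Real.exp_log hu0]
    have := exp_lt_exp.1 this
    simpa using by linarith

lemma exp_neg_injOn (s : Set ℝ) : InjOn (fun t : ℝ => exp (-t)) s := by
  intro a _ b _ h
  have := Real.exp_injective h
  linarith [neg_injective this]

lemma key_deriv (s : Set ℝ) (x : ℝ) :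
    HasDerivWithinAt (fun t : ℝ => exp (-t)) (-exp (-x)) s x := by
  have := ((Real.hasDerivAt_exp (-x)).comp x (hasDerivAt_neg x))
  rw [mul_neg_one] at this
  exact this.hasDerivWithinAt

lemma key_integral (c : ℝ) (s : Set ℝ) (hs : MeasurableSet s) :
    ∫ t in s, exp (-t) * exp (-(c * exp (-t))) =
      ∫ u in (fun t : ℝ => exp (-t)) '' s, exp (-(c * u)) := by
  rw [integral_image_eq_integral_abs_deriv_smul hs (fun x _ => key_deriv s x)
    (exp_neg_injOn s) (fun u => exp (-(c * u)))]
  simp [abs_of_pos (exp_pos _)]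

lemma key_integrable (c : ℝ) (hc : 0 < c) (s : Set ℝ) (hs : MeasurableSet s) :
    IntegrableOn (fun t => exp (-t) * exp (-(c * exp (-t)))) s := by
  have h1 : IntegrableOn (fun u => exp (-(c * u))) ((fun t : ℝ => exp (-t)) '' s) := by
    have h2 : IntegrableOn (fun u => exp (-(c * u))) (Ioi 0) := by
      have := exp_neg_integrableOn_Ioi 0 hc
      simpa [neg_mul] using this
    exact h2.mono_set (by rintro u ⟨t, _, rfl⟩; exact exp_pos _)
  have := (integrableOn_image_iff_integrableOn_abs_deriv_smul hs
    (fun x _ => key_deriv s x) (exp_neg_injOn s) (fun u => exp (-(c * u)))).1 h1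
  simpa [abs_of_pos (exp_pos _)] using this

lemma key_lintegral (c : ℝ) (hc : 0 < c) (s : Set ℝ) (hs : MeasurableSet s) :
    ∫⁻ t in s, ENNReal.ofReal (exp (-t) * exp (-(c * exp (-t)))) =
      ENNReal.ofReal (∫ u in (fun t : ℝ => exp (-t)) '' s, exp (-(c * u))) := by
  rw [← key_integral c s hs,
    ofReal_integral_eq_lintegral_ofReal (key_integrable c hc s hs)
      (Filter.Eventually.of_forall fun t => by positivity)]

lemma integral_exp_neg_mul_Ioi (c : ℝ) (hc : 0 < c) (a : ℝ) :
    ∫ u in Ioi a, exp (-(c * u)) = c⁻¹ * exp (-(c * a)) := by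
  have := integral_comp_mul_left_Ioi (fun x => exp (-x)) a hc
  simp only [smul_eq_mul] at this
  rw [this, integral_exp_neg_Ioi]




lemma density_eq (t : ℝ) : exp (-t - exp (-t)) = exp (-t) * exp (-(1 * exp (-t))) := by
  rw [← Real.exp_add]; ring_nf

lemma gumbel_apply {s : Set ℝ} (hs : MeasurableSet s) :
    gumbel s = ∫⁻ t in s, ENNReal.ofReal (exp (-t) * exp (-(1 * exp (-t)))) := by
  rw [gumbel, withDensity_apply _ hs]
  simp_rw [density_eq]

lemma gumbel_Iio (r : ℝ) : gumbel (Iio r) = ENNReal.ofReal (exp (-exp (-r))) := by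
  rw [gumbel_apply measurableSet_Iio, key_lintegral 1 one_pos _ measurableSet_Iio,
    image_exp_neg_Iio, integral_exp_neg_mul_Ioi 1 one_pos]
  norm_num

instance : IsProbabilityMeasure gumbel := by
  constructor
  rw [gumbel_apply MeasurableSet.univ, key_lintegral 1 one_pos _ MeasurableSet.univ,
    image_exp_neg_univ, integral_exp_neg_mul_Ioi 1 one_pos]
  norm_num

lemma lintegral_gumbel (c : ℝ) (hc : 0 ≤ c) :
    ∫⁻ t, ENNReal.ofReal (exp (-(c * exp (-t)))) ∂gumbel
      = ENNReal.ofReal (1 / (1 + c)) := by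
  rw [gumbel, lintegral_withDensity_eq_lintegral_mul _ (by fun_prop) (by fun_prop)]
  have h1 : ∀ t : ℝ, ENNReal.ofReal (exp (-t - exp (-t))) * ENNReal.ofReal (exp (-(c * exp (-t))))
      = ENNReal.ofReal (exp (-t) * exp (-((1 + c) * exp (-t)))) := by
    intro t
    rw [← ENNReal.ofReal_mul (by positivity)]
    rw [← Real.exp_add, ← Real.exp_add]
    congr 1
    ring_nf
  simp only [Pi.mul_apply, h1]
  have hc1 : (0:ℝ) < 1 + c := by linarith
  rw [← setLIntegral_univ, key_lintegral (1 + c) hc1 _ MeasurableSet.univ,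
    image_exp_neg_univ, integral_exp_neg_mul_Ioi _ hc1]
  norm_num

end Auxiliary
section Auxiliary2
open Set



lemma pi_map_eval {ι : Type*} [Fintype ι] [DecidableEq ι] (μ : Measure ℝ) [IsProbabilityMeasure μ] (i : ι) :
    Measure.map (Function.eval i) (Measure.pi fun _ : ι => μ) = μ := by
  ext t ht
  rw [Measure.map_apply (measurable_pi_apply i) ht, Set.eval_preimage, Measure.pi_pi]
  rw [Finset.prod_eq_single i (fun j _ hj => by simp [Function.update_of_ne hj])
    (by simp)]
  simp

lemma measure_E {A : Type*} [Fintype A] [Nonempty A] (s : A → ℝ) (astar : A) :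
    (Measure.pi fun _ : A => gumbel)
        {g | ∀ b, b ≠ astar → s b + g b < s astar + g astar}
      = ENNReal.ofReal (Real.exp (s astar) / ∑ a, Real.exp (s a)) := by
  classical
  set p : A → Prop := fun a => a = astar with hp
  set C : ℝ := ∑ b : {a // ¬ p a}, exp (s b - s astar) with hC
  have hC0 : 0 ≤ C := Finset.sum_nonneg fun b _ => (exp_pos _).le
  set e := MeasurableEquiv.piEquivPiSubtypeProd (fun _ : A => ℝ) p with he
  set T : (Subtype p → ℝ) × ({a // ¬ p a} → ℝ) → Prop :=
    fun q => ∀ b : {a // ¬ p a}, s b + q.2 b < s astar + q.1 ⟨astar, rfl⟩ with hTdef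
  have hTm : MeasurableSet {q | T q} := by
    have : {q | T q} = ⋂ b : {a // ¬ p a},
        {q : (Subtype p → ℝ) × ({a // ¬ p a} → ℝ) |
          s b + q.2 b < s astar + q.1 ⟨astar, rfl⟩} := by
      ext q; simp [hTdef, Set.mem_iInter]
    rw [this]
    exact MeasurableSet.iInter fun b => measurableSet_lt (by fun_prop) (by fun_prop)
  have hE : {g : A → ℝ | ∀ b, b ≠ astar → s b + g b < s astar + g astar} = e ⁻¹' {q | T q} := by
    ext g
    simp only [Set.mem_setOf_eq, Set.mem_preimage, he, hTdef,
      MeasurableEquiv.piEquivPiSubtypeProd, Equiv.piEquivPiSubtypeProd,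
      MeasurableEquiv.coe_mk, Equiv.coe_fn_mk]
    constructor
    · intro h b; exact h b b.2
    · intro h b hb; exact h ⟨b, hb⟩
  have hmp := measurePreserving_piEquivPiSubtypeProd (fun _ : A => gumbel) p
  rw [hE, ← Measure.map_apply e.measurable hTm, hmp.map_eq, Measure.prod_apply hTm]
  have hslice : ∀ x : Subtype p → ℝ,
      (Measure.pi fun _ : {a // ¬ p a} => gumbel) (Prod.mk x ⁻¹' {q | T q})
        = ENNReal.ofReal (exp (-(C * exp (-(x ⟨astar, rfl⟩))))) := by
    intro x
    have h1 : Prod.mk x ⁻¹' {q | T q}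
        = Set.pi Set.univ (fun b : {a // ¬ p a} => Iio (s astar + x ⟨astar, rfl⟩ - s b)) := by
      ext y
      simp only [Set.mem_preimage, Set.mem_setOf_eq, hTdef, Set.mem_univ_pi, Set.mem_Iio]
      constructor <;> intro h b <;> have := h b <;> linarith
    rw [h1, Measure.pi_pi]
    simp_rw [gumbel_Iio]
    rw [← ENNReal.ofReal_prod_of_nonneg (fun b _ => (exp_pos _).le), ← Real.exp_sum]
    congr 2
    rw [hC, Finset.sum_mul, ← Finset.sum_neg_distrib]
    refine Finset.sum_congr rfl fun b _ => ?_
    rw [neg_inj, ← Real.exp_add]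
    congr 1
    ring
  simp_rw [hslice]
  have hF : Measurable fun t : ℝ => ENNReal.ofReal (exp (-(C * exp (-t)))) := by fun_prop
  have hev : MeasurePreserving (fun x : Subtype p → ℝ => x ⟨astar, rfl⟩)
      (@Measure.pi (Subtype p) (fun _ => ℝ) (Subtype.fintype p) _ fun _ => gumbel) gumbel :=
    ⟨measurable_pi_apply _,
      @pi_map_eval (Subtype p) (Subtype.fintype p) _ gumbel _ ⟨astar, rfl⟩⟩
  refine (hev.lintegral_comp hF).trans ?_
  rw [lintegral_gumbel C hC0]
  congr 1
  have hsum : 1 + C = ∑ a : A, exp (s a - s astar) := by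
    rw [← Finset.sum_filter_add_sum_filter_not Finset.univ p (fun a => exp (s a - s astar))]
    congr 1
    · have h2 : Finset.univ.filter p = {astar} := by
        ext a; simp only [Finset.mem_filter, Finset.mem_univ, true_and, Finset.mem_singleton, hp]
      rw [h2, Finset.sum_singleton]; simp
    · rw [hC]
      exact (Finset.sum_subtype (p := fun a => ¬ p a)
        (Finset.filter (fun a => ¬ p a) Finset.univ)
        (fun x => by simp only [Finset.mem_filter, Finset.mem_univ, true_and])
        (fun a => exp (s a - s astar))).symm
  rw [hsum]
  have h3 : ∑ a : A, exp (s a - s astar) = (∑ a : A, exp (s a)) / exp (s astar) := by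
    rw [Finset.sum_div]
    exact Finset.sum_congr rfl fun a _ => (Real.exp_sub _ _)
  rw [h3, one_div_div]




/-- **The Gumbel-max identity (eq. 15).** For independent standard Gumbel perturbations
`(g_a)_{a∈A}` of scores `(s_a)_{a∈A}`, almost surely the maximizer of `a ↦ s_a + g_a` is
unique, and for each `a*` the probability that `a*` is the strict maximizer equals the
softmax probability `exp(s_{a*}) / ∑_a exp(s a)`. -/
theorem gumbel_max_softmax
    {A : Type*} [Fintype A] [Nonempty A] (s : A → ℝ) :
    (∀ᵐ g ∂(Measure.pi fun _ : A => gumbel),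
      ∃! a : A, ∀ b, b ≠ a → s b + g b < s a + g a) ∧
    ∀ astar : A,
      (Measure.pi fun _ : A => gumbel)
          {g | ∀ b, b ≠ astar → s b + g b < s astar + g astar}
        = ENNReal.ofReal (Real.exp (s astar) / ∑ a, Real.exp (s a)) := by
  classical
  refine ⟨?_, fun astar => measure_E s astar⟩
  set μ := Measure.pi fun _ : A => gumbel with hμ
  haveI : IsProbabilityMeasure μ := by rw [hμ]; infer_instance
  set E : A → Set (A → ℝ) := fun a => {g | ∀ b, b ≠ a → s b + g b < s a + g a} with hEdef
  have hmeas : ∀ a : A, MeasurableSet (E a) := by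
    intro a
    have : E a = ⋂ b, ⋂ (_ : b ≠ a), {g : A → ℝ | s b + g b < s a + g a} := by
      ext g; simp [hEdef]
    rw [this]
    exact MeasurableSet.iInter fun b => MeasurableSet.iInter fun _ =>
      measurableSet_lt (by fun_prop) (by fun_prop)
  have hdisj : Pairwise (Function.onFun Disjoint E) := by
    intro a a' haa'
    simp only [Function.onFun, Set.disjoint_left, hEdef, Set.mem_setOf_eq]
    intro g hg hg'
    have h1 := hg a' (Ne.symm haa')
    have h2 := hg' a haa'
    linarith
  have hsum : ∑ a : A, μ (E a) = 1 := by
    have : ∀ a, μ (E a) = ENNReal.ofReal (exp (s a) / ∑ b, exp (s b)) :=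
      fun a => measure_E s a
    simp_rw [this]
    rw [← ENNReal.ofReal_sum_of_nonneg (fun a _ => by positivity), ← Finset.sum_div]
    have hpos : 0 < ∑ a : A, exp (s a) :=
      Finset.sum_pos (fun a _ => exp_pos _) Finset.univ_nonempty
    rw [div_self hpos.ne', ENNReal.ofReal_one]
  have hU : μ (⋃ a, E a) = 1 := by
    rw [measure_iUnion hdisj hmeas, tsum_fintype]
    exact hsum
  have hcompl : μ (⋃ a, E a)ᶜ = 0 := by
    rw [measure_compl (MeasurableSet.iUnion hmeas) (measure_ne_top μ _), hU, measure_univ,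
      tsub_self]
  rw [ae_iff]
  refine measure_mono_null ?_ hcompl
  intro g hg
  simp only [Set.mem_compl_iff, Set.mem_iUnion, Set.mem_setOf_eq] at *
  intro ⟨a, ha⟩
  refine hg ⟨a, ha, fun a' ha' => ?_⟩
  by_contra hne
  have h1 := ha a' hne
  have h2 := ha' a (fun h => hne h.symm)
  linarith

end Auxiliary2
end
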